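/- arXiv:1812.02166 — 5 statements merged into one kernel-verified Lean document; each statement's English description precedes it below -/
import Mathlib

section
/- Let (C_0, C_1) be an equitable partition of Q_n with quotient matrix [[a,b],[c,d]] and associated function f. Then every Fourier coefficient f̂(x) with wt(x) ≠ (b+c)/2 vanishes. -/
attribute [local instance] Classical.propDecidable
noncomputable section

/-- Vertices of the `n`-cube: binary words of length `n` over GF(2). -/
abbrev Vtx (n : ℕ) := Fin n → ZMod 2

/-- The (Hamming) weight of a word: the number of ones. -/
def wt {n : ℕ} (x : Vtx n) : ℕ := (Finset.univ.filter (fun i => x i = 1)).card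

/-- The inner product `x₁y₁ + ⋯ + xₙyₙ` computed as a natural number. -/
def ip {n : ℕ} (x y : Vtx n) : ℕ := ∑ i, (x i).val * (y i).val

/-- The character `χ_y(x) = (−1)^⟨x,y⟩`. -/
def chi {n : ℕ} (y x : Vtx n) : ℚ := (-1) ^ ip x y

/-- `leq z x` means `z ≼ x`, i.e. `zᵢ ≤ xᵢ` for all `i`. -/
def leq {n : ℕ} (x y : Vtx n) : Prop := ∀ i, (x i).val ≤ (y i).val

/-- The Fourier coefficient `f̂(y) = 2^{−n} Σ_z f(z)(−1)^⟨z,y⟩`. -/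
def hat {n : ℕ} (f : Vtx n → ℚ) (y : Vtx n) : ℚ :=
  (∑ z, f z * (-1 : ℚ) ^ ip z y) / 2 ^ n

/-- Adjacency in the `n`-cube: the words differ in exactly one coordinate. -/
def adj {n : ℕ} (x y : Vtx n) : Prop :=
  (Finset.univ.filter (fun i => x i ≠ y i)).card = 1

/-- `(C0, complement of C0)` is an equitable partition with quotient matrix
`[[a,b],[c,d]]`. -/
def IsEqPartition {n : ℕ} (C0 : Finset (Vtx n)) (a b c d : ℕ) : Prop :=
  (∀ x ∈ C0, (Finset.univ.filter (fun y => adj x y ∧ y ∈ C0)).card = a ∧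
             (Finset.univ.filter (fun y => adj x y ∧ y ∉ C0)).card = b) ∧
  (∀ x ∉ C0, (Finset.univ.filter (fun y => adj x y ∧ y ∈ C0)).card = c ∧
             (Finset.univ.filter (fun y => adj x y ∧ y ∉ C0)).card = d)

/-- The associated function of an equitable partition: `b` on `C0`, `−c` outside. -/
def assoc {n : ℕ} (C0 : Finset (Vtx n)) (b c : ℕ) : Vtx n → ℚ :=
  fun x => if x ∈ C0 then (b : ℚ) else -(c : ℚ)

/-- The face `Γ_u^v = {z + v : z ≼ u}` (of dimension `wt u`). -/
def face {n : ℕ} (u v : Vtx n) : Finset (Vtx n) :=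
  Finset.univ.filter (fun x => ∃ z, leq z u ∧ x = z + v)

/-!
The associated function `f` of an equitable partition is an eigenfunction of the adjacency
operator of `Q_n` with eigenvalue `n - b - c`, because every vertex of `C₀` has `b` neighbours
outside `C₀` and every vertex outside has `c` neighbours inside. On the Fourier side the adjacency
operator is diagonal: flipping bit `i` multiplies `(-1)^⟨z,x⟩` by `(-1)^{x_i}`, so it acts on `f̂(x)`
as multiplication by `Σᵢ (-1)^{x_i} = n - 2 wt x`. Hence `(n - b - c) f̂(x) = (n - 2 wt x) f̂(x)`,
and `f̂(x) = 0` unless `2 wt x = b + c`.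
-/

namespace Hypercube

variable {n : ℕ}

lemma zmod_two_cases (u : ZMod 2) : u = 0 ∨ u = 1 := by revert u; decide

def flipBit (z : Vtx n) (i : Fin n) : Vtx n := z + Pi.single i 1

lemma flipBit_apply (z : Vtx n) (i j : Fin n) :
    flipBit z i j = if j = i then z j + 1 else z j := by
  by_cases hj : j = i
  · subst hj; simp [flipBit]
  · simp [flipBit, hj]

lemma flipBit_flipBit (z : Vtx n) (i : Fin n) : flipBit (flipBit z i) i = z := by
  simp only [flipBit, add_assoc, ← Pi.single_add, show (1 + 1 : ZMod 2) = 0 from rfl,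
    Pi.single_zero, add_zero]

lemma flipBit_involutive (i : Fin n) : Function.Involutive (flipBit · i) :=
  fun z => flipBit_flipBit z i

lemma flipBit_injective (z : Vtx n) : Function.Injective (flipBit z) := by
  intro i j hij
  by_contra hne
  have := congrFun hij i
  simp only [flipBit_apply, if_neg hne] at this
  exact one_ne_zero (add_eq_left.mp this)

lemma adj_iff_exists_flipBit (z y : Vtx n) : adj z y ↔ ∃ i, y = flipBit z i := by
  have flip_of_ne : ∀ u v : ZMod 2, u ≠ v ↔ v = u + 1 := by decide
  constructor
  · intro hzy
    obtain ⟨i, hi⟩ := Finset.card_eq_one.mp hzy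
    refine ⟨i, funext fun j => ?_⟩
    have hj := Finset.ext_iff.mp hi j
    simp only [Finset.mem_filter, Finset.mem_univ, true_and, Finset.mem_singleton] at hj
    rw [flipBit_apply]
    split_ifs with hji
    · exact (flip_of_ne _ _).mp (hj.mpr hji)
    · exact (not_not.mp (mt hj.mp hji)).symm
  · rintro ⟨i, rfl⟩
    refine Finset.card_eq_one.mpr ⟨i, Finset.ext fun j => ?_⟩
    simp only [Finset.mem_filter, Finset.mem_univ, true_and, Finset.mem_singleton, flipBit_apply]
    split_ifs with hji <;> simp [hji]

lemma card_adj_filter (z : Vtx n) (P : Vtx n → Prop) [DecidablePred fun y => adj z y ∧ P y]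
    [DecidablePred fun i => P (flipBit z i)] :
    (Finset.univ.filter (fun y => adj z y ∧ P y)).card
      = (Finset.univ.filter (fun i => P (flipBit z i))).card := by
  rw [← Finset.card_image_of_injective _ (flipBit_injective z)]
  congr 1
  ext y
  simp only [Finset.mem_filter, Finset.mem_univ, true_and, Finset.mem_image, adj_iff_exists_flipBit]
  grind

def adjOp (f : Vtx n → ℚ) (z : Vtx n) : ℚ := ∑ i, f (flipBit z i)

lemma adjOp_assoc (C0 : Finset (Vtx n)) (b c : ℕ) (z : Vtx n) :
    adjOp (assoc C0 b c) z
      = (Finset.univ.filter (fun y => adj z y ∧ y ∈ C0)).card * (b : ℚ)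
        - (Finset.univ.filter (fun y => adj z y ∧ y ∉ C0)).card * (c : ℚ) := by
  rw [card_adj_filter z (· ∈ C0), card_adj_filter z (· ∉ C0)]
  simp only [adjOp, assoc, Finset.sum_ite, Finset.sum_const, nsmul_eq_mul]
  ring

theorem IsEqPartition.adjOp_assoc {C0 : Finset (Vtx n)} {a b c d : ℕ}
    (h : IsEqPartition C0 a b c d) (hab : a + b = n) (hcd : c + d = n) (z : Vtx n) :
    adjOp (assoc C0 b c) z = ((n : ℚ) - b - c) * assoc C0 b c z := by
  rw [Hypercube.adjOp_assoc]
  by_cases hz : z ∈ C0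
  · obtain ⟨ha, hb⟩ := h.1 z hz
    simp only [ha, hb, assoc, if_pos hz, ← hab]
    push_cast; ring
  · obtain ⟨hc, hd⟩ := h.2 z hz
    simp only [hc, hd, assoc, if_neg hz, ← hcd]
    push_cast; ring

lemma neg_one_pow_ip_flipBit (w x : Vtx n) (i : Fin n) :
    (-1 : ℚ) ^ ip (flipBit w i) x = (-1) ^ (x i).val * (-1) ^ ip w x := by
  have coord : ∀ u v : ZMod 2,
      (-1 : ℚ) ^ ((u + 1).val * v.val) = (-1) ^ v.val * (-1) ^ (u.val * v.val) := by
    intro u v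
    rcases zmod_two_cases u with rfl | rfl <;> rcases zmod_two_cases v with rfl | rfl <;>
      simp [show (1 + 1 : ZMod 2) = 0 from rfl, ZMod.val_one]
  simp only [ip, ← Finset.prod_pow_eq_pow_sum]
  rw [Fintype.prod_eq_mul_prod_compl i, Fintype.prod_eq_mul_prod_compl i, flipBit_apply,
    if_pos rfl, coord, mul_assoc]
  congr 2
  refine Finset.prod_congr rfl fun j hj => ?_
  rw [Finset.mem_compl, Finset.mem_singleton] at hj
  simp only [flipBit_apply, if_neg hj]

lemma sum_neg_one_pow_val (x : Vtx n) : ∑ i, (-1 : ℚ) ^ (x i).val = n - 2 * wt x := by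
  have coord : ∀ u : ZMod 2, (-1 : ℚ) ^ u.val = if u = 1 then -1 else 1 := by
    intro u; rcases zmod_two_cases u with rfl | rfl <;> simp [ZMod.val_one]
  have hcard := Finset.card_filter_add_card_filter_not (s := Finset.univ) (fun i : Fin n => x i = 1)
  simp only [Finset.card_univ, Fintype.card_fin] at hcard
  simp only [coord, Finset.sum_ite, Finset.sum_const, nsmul_eq_mul, wt, ← hcard]
  push_cast; ring

lemma hat_const_mul (μ : ℚ) (f : Vtx n → ℚ) (y : Vtx n) :
    hat (fun z => μ * f z) y = μ * hat f y := by
  simp only [hat, mul_assoc, ← Finset.mul_sum, mul_div_assoc]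

theorem hat_adjOp (f : Vtx n → ℚ) (x : Vtx n) :
    hat (adjOp f) x = ((n : ℚ) - 2 * wt x) * hat f x := by
  have shift : ∀ i, ∑ z, f (flipBit z i) * (-1 : ℚ) ^ ip z x
      = (-1) ^ (x i).val * ∑ z, f z * (-1 : ℚ) ^ ip z x := by
    intro i
    rw [← Equiv.sum_comp (Function.Involutive.toPerm _ (flipBit_involutive i)), Finset.mul_sum]
    refine Finset.sum_congr rfl fun z _ => ?_
    rw [Function.Involutive.coe_toPerm, flipBit_flipBit, neg_one_pow_ip_flipBit]
    ring
  simp only [hat, adjOp, Finset.sum_mul]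
  rw [Finset.sum_comm, Finset.sum_congr rfl fun i _ => shift i, ← Finset.sum_mul,
    sum_neg_one_pow_val, mul_div_assoc]

end Hypercube

open Hypercube in
theorem stmt5 (n a b c d : ℕ) (C0 : Finset (Vtx n))
    (h : IsEqPartition C0 a b c d) (hab : a + b = n) (hcd : c + d = n) :
    ∀ x : Vtx n, 2 * wt x ≠ b + c → hat (assoc C0 b c) x = 0 := by
  intro x hx
  have eigen := hat_adjOp (assoc C0 b c) x
  rw [funext (h.adjOp_assoc hab hcd), hat_const_mul] at eigen
  have hne : (n : ℚ) - b - c ≠ n - 2 * wt x := by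
    intro h'
    exact hx (by exact_mod_cast (by linarith : (2 * wt x : ℚ) = b + c))
  by_contra hhat
  exact hne (mul_right_cancel₀ hhat eigen)
end
end

section
/- Let (C_0, C_1) be an equitable partition of Q_n with quotient matrix [[a,b],[c,d]] and associated function f. Then for every x ≠ 0, (b−c)·f̂(x) = Σ_{y+z=x} f̂(y)·f̂(z), and moreover bc = Σ_y f̂(y)^2. -/
attribute [local instance] Classical.propDecidable
noncomputable section

/-! The associated function `f` satisfies `(f - b)(f + c) = 0`, i.e. `f² = (b - c) f + bc`.
The Fourier transform turns the pointwise square into the self-convolution of `f̂` (by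
orthogonality of the characters `χ_y`) and the constant `bc` into `bc · δ₀`. Double counting
the edges between `C₀` and its complement gives `|C₀| b = |C₁| c`, i.e. `f̂(0) = 0`; the two
identities are then the values of `f̂ * f̂` at `x ≠ 0` and at `x = 0`. -/

open Finset Matrix

lemma sum_filter_fst_add_snd_eq {G M : Type*} [AddCommGroup G] [Fintype G] [DecidableEq G]
    [AddCommMonoid M] (F : G × G → M) (x : G) :
    ∑ p ∈ univ.filter (fun p : G × G => p.1 + p.2 = x), F p = ∑ y, F (y, x - y) := by
  simp only [sum_filter, Fintype.sum_prod_type, ← eq_sub_iff_add_eq', sum_ite_eq', mem_univ,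
    if_true]

section

variable {n : ℕ}

lemma ip_comm (x y : Vtx n) : ip x y = ip y x := by
  simp only [ip, mul_comm]

lemma natCast_ip (x y : Vtx n) : (ip x y : ZMod 2) = x ⬝ᵥ y := by
  simp [ip, dotProduct, ZMod.natCast_val]

lemma chi_add (y x x' : Vtx n) : chi y (x + x') = chi y x * chi y x' := by
  rw [chi, chi, chi, ← pow_add]
  apply neg_one_pow_congr
  simp only [← ZMod.natCast_eq_zero_iff_even, Nat.cast_add, natCast_ip, add_dotProduct]

lemma chi_comm (x y : Vtx n) : chi x y = chi y x := by
  rw [chi, chi, ip_comm]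

def chiChar (y : Vtx n) : AddChar (Vtx n) ℚ where
  toFun := chi y
  map_zero_eq_one' := by simp [chi, ip]
  map_add_eq_mul' := chi_add y

lemma chi_single_of_ne_zero {y : Vtx n} {i : Fin n} (hi : y i ≠ 0) :
    chi y (Pi.single i 1) = -1 := by
  have hyi : y i = 1 := (by decide : ∀ t : ZMod 2, t ≠ 0 → t = 1) _ hi
  simp [chi, ip, Pi.single_apply, apply_ite ZMod.val, ite_mul, hyi, ZMod.val_one]

lemma sum_chi (y : Vtx n) : ∑ x, chi y x = if y = 0 then 2 ^ n else 0 := by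
  split_ifs with hy
  · simp [hy, chi, ip]
  · obtain ⟨i, hi⟩ := Function.ne_iff.1 hy
    refine AddChar.sum_eq_zero_iff_ne_zero.2
      (AddChar.ne_zero_iff.2 ⟨Pi.single i 1, ?_⟩ : chiChar y ≠ 0)
    change chi y _ ≠ 1
    rw [chi_single_of_ne_zero hi]
    norm_num

lemma hat_eq_sum_chi (f : Vtx n → ℚ) (y : Vtx n) :
    hat f y = (∑ z, f z * chi y z) / 2 ^ n := rfl

lemma hat_zero (f : Vtx n → ℚ) : hat f 0 = (∑ z, f z) / 2 ^ n := by
  simp [hat, ip]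

lemma hat_mul_add_const (α β : ℚ) (f : Vtx n → ℚ) (x : Vtx n) :
    hat (fun z => α * f z + β) x = α * hat f x + if x = 0 then β else 0 := by
  simp only [hat_eq_sum_chi, add_mul, sum_add_distrib, mul_assoc, ← mul_sum, sum_chi]
  split_ifs <;> simp [add_div, mul_div_assoc]

lemma hat_mul (f g : Vtx n → ℚ) (x : Vtx n) :
    hat (f * g) x
      = ∑ p ∈ univ.filter (fun p : Vtx n × Vtx n => p.1 + p.2 = x), hat f p.1 * hat g p.2 := by
  have chi_x_add (y v : Vtx n) : chi (x + y) v = chi x v * chi y v := by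
    rw [chi_comm, chi_add, chi_comm v, chi_comm v]
  have chi_mul_chi (y u v : Vtx n) : chi y u * chi y v = chi (u + v) y := by
    rw [← chi_add, chi_comm]
  rw [sum_filter_fst_add_snd_eq]
  symm
  calc ∑ y, hat f y * hat g (x - y)
      = (∑ y, ∑ u, ∑ v, f u * g v * chi x v * chi (u + v) y) / (2 ^ n * 2 ^ n) := by
        simp only [ZModModule.sub_eq_add, hat_eq_sum_chi, div_mul_div_comm, ← sum_div,
          sum_mul_sum, chi_x_add, ← chi_mul_chi]
        congr 1
        refine sum_congr rfl fun y _ => sum_congr rfl fun u _ => sum_congr rfl fun v _ => ?_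
        ring
    _ = (∑ u, ∑ v, f u * g v * chi x v * ∑ y, chi (u + v) y) / (2 ^ n * 2 ^ n) := by
        rw [sum_comm]
        refine congrArg (· / _) (sum_congr rfl fun u _ => ?_)
        rw [sum_comm]
        simp only [mul_sum]
    _ = hat (f * g) x := by
        simp only [sum_chi, add_eq_zero_iff_eq_neg, ZModModule.neg_eq_self, mul_ite, mul_zero,
          sum_ite_eq, mem_univ, if_true, hat_eq_sum_chi, ← sum_mul, Pi.mul_apply]
        field_simp

lemma adj_comm (x y : Vtx n) : adj x y ↔ adj y x := by
  simp only [adj, ne_comm]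

lemma IsEqPartition.card_mul_eq {C0 : Finset (Vtx n)} {a b c d : ℕ}
    (h : IsEqPartition C0 a b c d) : #C0 * b = #C0ᶜ * c := by
  refine card_mul_eq_card_mul adj (fun x hx => ?_) (fun y hy => ?_)
  · rw [← (h.1 x hx).2, bipartiteAbove]
    congr 1
    ext y
    simp [and_comm]
  · rw [← (h.2 y (mem_compl.1 hy)).1, bipartiteBelow]
    congr 1
    ext x
    simp [and_comm, adj_comm x y]

lemma IsEqPartition.sum_assoc_eq_zero {C0 : Finset (Vtx n)} {a b c d : ℕ}
    (h : IsEqPartition C0 a b c d) : ∑ z, assoc C0 b c z = 0 := by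
  have hcard : (#C0 * b : ℚ) = #C0ᶜ * c := by exact_mod_cast h.card_mul_eq
  have hcompl : univ.filter (· ∉ C0) = C0ᶜ := by ext; simp
  simp only [assoc, sum_ite, filter_univ_mem, hcompl, sum_const, nsmul_eq_mul]
  linear_combination hcard

lemma assoc_mul_self (C0 : Finset (Vtx n)) (b c : ℕ) :
    assoc C0 b c * assoc C0 b c = fun z => ((b : ℚ) - c) * assoc C0 b c z + b * c := by
  funext z
  by_cases hz : z ∈ C0 <;> simp only [Pi.mul_apply, assoc, hz, if_true, if_false] <;> ring

end

theorem stmt6_general (n a b c d : ℕ) (C0 : Finset (Vtx n))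
    (h : IsEqPartition C0 a b c d) :
    (∀ x : Vtx n, x ≠ 0 →
      ((b : ℚ) - c) * hat (assoc C0 b c) x
        = ∑ p ∈ Finset.univ.filter (fun p : Vtx n × Vtx n => p.1 + p.2 = x),
            hat (assoc C0 b c) p.1 * hat (assoc C0 b c) p.2) ∧
    (b : ℚ) * c = ∑ y : Vtx n, hat (assoc C0 b c) y ^ 2 := by
  set f := assoc C0 b c
  have conv_hat_f (x : Vtx n) :
      ∑ p ∈ univ.filter (fun p : Vtx n × Vtx n => p.1 + p.2 = x), hat f p.1 * hat f p.2
        = (b - c) * hat f x + if x = 0 then (b * c : ℚ) else 0 := by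
    rw [← hat_mul, assoc_mul_self, hat_mul_add_const]
  refine ⟨fun x hx => by rw [conv_hat_f, if_neg hx, add_zero], ?_⟩
  have hat_f_zero : hat f 0 = 0 := by rw [hat_zero, h.sum_assoc_eq_zero, zero_div]
  simpa [hat_f_zero, sum_filter_fst_add_snd_eq, ZModModule.neg_eq_self, sq] using
    (conv_hat_f 0).symm

theorem stmt6 (n a b c d : ℕ) (C0 : Finset (Vtx n))
    (h : IsEqPartition C0 a b c d) (hab : a + b = n) (hcd : c + d = n) :
    (∀ x : Vtx n, x ≠ 0 →
      ((b : ℚ) - c) * hat (assoc C0 b c) x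
        = ∑ p ∈ Finset.univ.filter (fun p : Vtx n × Vtx n => p.1 + p.2 = x),
            hat (assoc C0 b c) p.1 * hat (assoc C0 b c) p.2) ∧
    (b : ℚ) * c = ∑ y : Vtx n, hat (assoc C0 b c) y ^ 2 :=
  stmt6_general n a b c d C0 h
end
end

section
/- Let (C_0,C_1) be an equitable partition of Q_n with quotient matrix [[a,b],[c,d]], b ≠ c, satisfying a − c = −n/3, with associated function f. Then the quantity Σ_{x : x_i = 0} f̂(x)^2 is the same for all coordinates i ∈ {1,…,n}. -/
attribute [local instance] Classical.propDecidable
noncomputable section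

namespace S7

variable {n : ℕ}

/-- standard basis vector -/
def ee (l : Fin n) : Vtx n := fun m => if m = l then 1 else 0

lemma z2_add_self : ∀ a : ZMod 2, a + a = 0 := by decide
lemma z2_ne_zero : ∀ a : ZMod 2, a ≠ 0 → a = 1 := by decide
lemma z2_val_one : (1 : ZMod 2).val = 1 := rfl
lemma z2_ne : ∀ a bb : ZMod 2, a ≠ bb → bb = a + 1 := by decide
lemma z2_ne_add_one : ∀ a : ZMod 2, a ≠ a + 1 := by decide
lemma z2_one_ne_zero : (1 : ZMod 2) ≠ 0 := by decide
lemma z2_cases : ∀ a : ZMod 2, a = 0 ∨ a = 1 := by decide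
lemma z2_ite_val : ∀ a : ZMod 2, (if a = 1 then 1 else 0) = a.val := by decide
lemma z2_triple_le : ∀ a bb cc : ZMod 2, a + bb + cc = 0 → a.val + bb.val + cc.val ≤ 2 := by
  decide
lemma z2_val_add_mul : ∀ a bb cc : ZMod 2,
    ((a+bb).val * cc.val) % 2 = ((a.val*cc.val) + (bb.val*cc.val)) % 2 := by decide

lemma vadd_self (x : Vtx n) : x + x = 0 := funext fun l => z2_add_self _

lemma vadd_eq_zero {x y : Vtx n} : x + y = 0 ↔ x = y := by
  constructor
  · intro h
    calc x = x + (y + y) := by rw [vadd_self, add_zero]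
    _ = (x + y) + y := by rw [add_assoc]
    _ = y := by rw [h, zero_add]
  · intro h; rw [h, vadd_self]

lemma neg_one_pow_mod (a : ℕ) : ((-1:ℚ)) ^ a = (-1) ^ (a % 2) := by
  conv_lhs => rw [← Nat.div_add_mod a 2]
  rw [pow_add, pow_mul, neg_one_sq, one_pow, one_mul]

lemma neg_one_pow_congr {a b : ℕ} (h : a % 2 = b % 2) : ((-1:ℚ))^a = (-1:ℚ)^b := by
  rw [neg_one_pow_mod a, neg_one_pow_mod b, h]

lemma ip_mod (x t y : Vtx n) : ip (x + t) y % 2 = (ip x y + ip t y) % 2 := by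
  unfold ip
  rw [← Finset.sum_add_distrib, Finset.sum_nat_mod,
    Finset.sum_nat_mod Finset.univ 2 (fun i => ((x i).val * (y i).val + (t i).val * (y i).val))]
  congr 1
  apply Finset.sum_congr rfl
  intro m _
  exact z2_val_add_mul (x m) (t m) (y m)

lemma chi_add_left (x t y : Vtx n) :
    ((-1:ℚ))^(ip (x+t) y) = (-1:ℚ)^(ip x y) * (-1:ℚ)^(ip t y) := by
  rw [← pow_add]; exact neg_one_pow_congr (ip_mod x t y)

lemma ip_comm (x y : Vtx n) : ip x y = ip y x :=
  Finset.sum_congr rfl (fun m _ => mul_comm _ _)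

lemma chi_add_right (z u v : Vtx n) :
    ((-1:ℚ))^(ip z (u+v)) = (-1:ℚ)^(ip z u) * (-1:ℚ)^(ip z v) := by
  rw [ip_comm z (u+v), ip_comm z u, ip_comm z v]; exact chi_add_left u v z

lemma ip_ee (l : Fin n) (y : Vtx n) : ip (ee l) y = (y l).val := by
  unfold ip ee
  rw [Finset.sum_eq_single l]
  · simp [z2_val_one]
  · intro m _ hm; simp [hm]
  · intro h; exact absurd (Finset.mem_univ l) h

lemma card_vtx : Fintype.card (Vtx n) = 2^n := by
  rw [Fintype.card_fun, ZMod.card, Fintype.card_fin]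

lemma orth_sum (t : Vtx n) :
    ∑ y : Vtx n, ((-1:ℚ))^(ip t y) = if t = 0 then (2^n : ℚ) else 0 := by
  by_cases ht : t = 0
  · rw [if_pos ht]
    have h0 : ∀ y : Vtx n, ip t y = 0 := by
      intro y; rw [ht]; unfold ip; apply Finset.sum_eq_zero; intro m _
      simp [ZMod.val_zero]
    calc ∑ y : Vtx n, ((-1:ℚ))^(ip t y)
        = ∑ _y : Vtx n, (1:ℚ) := by
          apply Finset.sum_congr rfl; intro y _; rw [h0 y, pow_zero]
      _ = (Fintype.card (Vtx n) : ℚ) := by rw [Finset.sum_const, Finset.card_univ]; simp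
      _ = (2^n : ℚ) := by rw [card_vtx]; push_cast; ring
  · rw [if_neg ht]
    obtain ⟨l, hl⟩ := Function.ne_iff.mp ht
    have hl1 : t l = 1 := z2_ne_zero _ hl
    have key : ∑ y : Vtx n, ((-1:ℚ))^(ip t y) = - ∑ y : Vtx n, ((-1:ℚ))^(ip t y) := by
      calc ∑ y : Vtx n, ((-1:ℚ))^(ip t y)
          = ∑ y : Vtx n, ((-1:ℚ))^(ip t (y + ee l)) := by
            apply Fintype.sum_equiv (Equiv.addRight (ee l))
            intro y
            simp only [Equiv.coe_addRight]
            rw [add_assoc, vadd_self, add_zero]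
        _ = ∑ y : Vtx n, ((-1:ℚ))^(ip t y) * ((-1:ℚ))^(ip t (ee l)) := by
            apply Finset.sum_congr rfl; intro y _; rw [chi_add_right]
        _ = - ∑ y : Vtx n, ((-1:ℚ))^(ip t y) := by
            have h1 : ip t (ee l) = 1 := by rw [ip_comm, ip_ee, hl1, z2_val_one]
            rw [h1, ← Finset.sum_neg_distrib]
            apply Finset.sum_congr rfl; intro y _; ring
    linarith

lemma orth_sum' (t : Vtx n) :
    ∑ z : Vtx n, ((-1:ℚ))^(ip z t) = if t = 0 then (2^n : ℚ) else 0 := by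
  rw [← orth_sum t]
  apply Finset.sum_congr rfl; intro z _; rw [ip_comm]

lemma sum_translate (t : Vtx n) (g : Vtx n → ℚ) :
    ∑ z : Vtx n, g (z + t) = ∑ z : Vtx n, g z := by
  apply Fintype.sum_equiv (Equiv.addRight t)
  intro z
  simp only [Equiv.coe_addRight]

/- ## adjacency -/

lemma adj_iff {z y : Vtx n} : adj z y ↔ ∃ l, y = z + ee l := by
  constructor
  · intro h
    obtain ⟨l, hl⟩ := Finset.card_eq_one.mp h
    refine ⟨l, funext fun m => ?_⟩
    by_cases hm : m = l
    · subst hm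
      have hmem : m ∈ Finset.univ.filter (fun i => z i ≠ y i) := by
        rw [hl]; exact Finset.mem_singleton_self m
      have : z m ≠ y m := (Finset.mem_filter.mp hmem).2
      have h2 : y m = z m + 1 := z2_ne _ _ this
      show y m = z m + ee m m
      rw [h2]; unfold ee; simp
    · have hnot : m ∉ Finset.univ.filter (fun i => z i ≠ y i) := by
        rw [hl]; simp [hm]
      have : ¬ (z m ≠ y m) := by
        intro hne; exact hnot (Finset.mem_filter.mpr ⟨Finset.mem_univ m, hne⟩)
      push_neg at this
      show y m = z m + ee l m
      unfold ee; simp [hm, ← this]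
  · rintro ⟨l, rfl⟩
    show (Finset.univ.filter (fun i => z i ≠ (z + ee l) i)).card = 1
    have : Finset.univ.filter (fun i => z i ≠ (z + ee l) i) = {l} := by
      ext m
      simp only [Finset.mem_filter, Finset.mem_univ, true_and, Finset.mem_singleton]
      constructor
      · intro hne
        by_contra hm
        apply hne
        show z m = z m + ee l m
        unfold ee
        rw [if_neg hm, add_zero]
      · intro hm; subst hm
        show z m ≠ z m + ee m m
        unfold ee; rw [if_pos rfl]
        exact z2_ne_add_one _
    rw [this, Finset.card_singleton]

lemma add_ee_inj (z : Vtx n) : ∀ l ∈ Finset.univ, ∀ l' ∈ Finset.univ,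
    z + ee l = z + ee l' → l = l' := by
  intro l _ l' _ h
  have h2 : ee l = ee l' := by
    funext m
    have := congrFun h m
    simpa using this
  by_contra hne
  have h3 := congrFun h2 l
  unfold ee at h3
  rw [if_pos rfl, if_neg hne] at h3
  exact z2_one_ne_zero h3

lemma nbr_image (z : Vtx n) :
    Finset.univ.filter (fun y => adj z y) = Finset.univ.image (fun l => z + ee l) := by
  ext y
  simp only [Finset.mem_filter, Finset.mem_univ, true_and, Finset.mem_image]
  rw [adj_iff]
  constructor
  · rintro ⟨l, rfl⟩; exact ⟨l, rfl⟩
  · rintro ⟨l, rfl⟩; exact ⟨l, rfl⟩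

lemma sum_nbrs (z : Vtx n) (g : Vtx n → ℚ) :
    ∑ l : Fin n, g (z + ee l) = ∑ y ∈ Finset.univ.filter (fun y => adj z y), g y := by
  rw [nbr_image, Finset.sum_image (add_ee_inj z)]

lemma sum_split (z : Vtx n) (C0 : Finset (Vtx n)) (g : Vtx n → ℚ) :
    ∑ y ∈ Finset.univ.filter (fun y => adj z y), g y
    = (∑ y ∈ Finset.univ.filter (fun y => adj z y ∧ y ∈ C0), g y)
      + ∑ y ∈ Finset.univ.filter (fun y => adj z y ∧ y ∉ C0), g y := by
  rw [← Finset.sum_filter_add_sum_filter_not (Finset.univ.filter (fun y => adj z y))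
    (fun y => y ∈ C0) g, Finset.filter_filter, Finset.filter_filter]

lemma eigen {C0 : Finset (Vtx n)} {a b c d : ℕ}
    (h : IsEqPartition C0 a b c d) (hab : a + b = n) (hcd : c + d = n) (z : Vtx n) :
    ∑ l : Fin n, assoc C0 b c (z + ee l) = ((a:ℚ) - (c:ℚ)) * assoc C0 b c z := by
  have hab' : (a:ℚ) + b = n := by exact_mod_cast hab
  have hcd' : (c:ℚ) + d = n := by exact_mod_cast hcd
  rw [sum_nbrs z (assoc C0 b c), sum_split z C0]
  have hin : ∀ S : Finset (Vtx n), (∀ y ∈ S, y ∈ C0) →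
      ∑ y ∈ S, assoc C0 b c y = (S.card : ℚ) * b := by
    intro S hS
    rw [Finset.sum_congr rfl (fun y hy => by unfold assoc; rw [if_pos (hS y hy)])]
    rw [Finset.sum_const, nsmul_eq_mul]
  have hout : ∀ S : Finset (Vtx n), (∀ y ∈ S, y ∉ C0) →
      ∑ y ∈ S, assoc C0 b c y = (S.card : ℚ) * (-(c:ℚ)) := by
    intro S hS
    rw [Finset.sum_congr rfl (fun y hy => by unfold assoc; rw [if_neg (hS y hy)])]
    rw [Finset.sum_const, nsmul_eq_mul]
  rw [hin _ (fun y hy => ((Finset.mem_filter.mp hy).2).2),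
      hout _ (fun y hy => ((Finset.mem_filter.mp hy).2).2)]
  by_cases hz : z ∈ C0
  · rw [(h.1 z hz).1, (h.1 z hz).2]
    unfold assoc; rw [if_pos hz]
    ring
  · rw [(h.2 z hz).1, (h.2 z hz).2]
    unfold assoc; rw [if_neg hz]
    linear_combination (c:ℚ) * hab' - (c:ℚ) * hcd'

/- ## Fourier side -/

def FF {n : ℕ} (C0 : Finset (Vtx n)) (b c : ℕ) (y : Vtx n) : ℚ :=
  ∑ z, assoc C0 b c z * (-1:ℚ)^(ip z y)

lemma wt_eq_sum (y : Vtx n) : wt y = ∑ l, (y l).val := by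
  unfold wt
  rw [Finset.card_filter]
  apply Finset.sum_congr rfl
  intro l _
  exact z2_ite_val (y l)

lemma sum_chi_coord (y : Vtx n) :
    ∑ l : Fin n, ((-1:ℚ))^((y l).val) = (n:ℚ) - 2 * wt y := by
  have step : ∀ l, ((-1:ℚ))^((y l).val) = if y l = 1 then (-1:ℚ) else 1 := by
    intro l
    rcases z2_cases (y l) with h | h <;> rw [h]
    · rw [if_neg (by decide)]; rfl
    · rw [if_pos rfl]; rfl
  rw [Finset.sum_congr rfl (fun l _ => step l), Finset.sum_ite, Finset.sum_const,
    Finset.sum_const]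
  have hcards : (Finset.univ.filter (fun l => y l = 1)).card
      + (Finset.univ.filter (fun l => ¬ (y l = 1))).card = n := by
    rw [Finset.card_filter_add_card_filter_not, Finset.card_univ, Fintype.card_fin]
  have hwt : (Finset.univ.filter (fun l => y l = 1)).card = wt y := rfl
  rw [hwt] at hcards
  have hcast : ((Finset.univ.filter (fun l => ¬ (y l = 1))).card : ℚ) = (n:ℚ) - wt y := by
    have := hcards
    have h2 : (wt y : ℚ) + ((Finset.univ.filter (fun l => ¬ (y l = 1))).card : ℚ) = n := by
      exact_mod_cast this
    linarith
  rw [hwt, nsmul_eq_mul, nsmul_eq_mul, mul_one, hcast]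
  ring

lemma FF_eigen {C0 : Finset (Vtx n)} {a b c d : ℕ}
    (h : IsEqPartition C0 a b c d) (hab : a + b = n) (hcd : c + d = n) (y : Vtx n) :
    ((n:ℚ) - 2 * wt y) * FF C0 b c y = ((a:ℚ) - (c:ℚ)) * FF C0 b c y := by
  set f := assoc C0 b c with hf
  calc ((n:ℚ) - 2 * wt y) * FF C0 b c y
      = (∑ l : Fin n, ((-1:ℚ))^((y l).val)) * FF C0 b c y := by rw [sum_chi_coord]
    _ = ∑ l : Fin n, ((-1:ℚ))^((y l).val) * FF C0 b c y := by rw [Finset.sum_mul]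
    _ = ∑ l : Fin n, ∑ z : Vtx n, f (z + ee l) * (-1:ℚ)^(ip z y) := by
        apply Finset.sum_congr rfl; intro l _
        have reind : ∑ z : Vtx n, f (z + ee l) * (-1:ℚ)^(ip z y)
            = ∑ z : Vtx n, f z * (-1:ℚ)^(ip (z + ee l) y) := by
          apply Fintype.sum_equiv (Equiv.addRight (ee l))
          intro z
          simp only [Equiv.coe_addRight]
          rw [add_assoc, vadd_self, add_zero]
        rw [reind, show FF C0 b c y = ∑ z, f z * (-1:ℚ)^(ip z y) from rfl, Finset.mul_sum]
        apply Finset.sum_congr rfl; intro z _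
        rw [chi_add_left, ip_ee]
        ring
    _ = ∑ z : Vtx n, ∑ l : Fin n, f (z + ee l) * (-1:ℚ)^(ip z y) := Finset.sum_comm
    _ = ∑ z : Vtx n, (((a:ℚ) - (c:ℚ)) * f z) * (-1:ℚ)^(ip z y) := by
        apply Finset.sum_congr rfl; intro z _
        rw [← Finset.sum_mul, eigen h hab hcd z]
    _ = ((a:ℚ) - (c:ℚ)) * FF C0 b c y := by
        rw [show FF C0 b c y = ∑ z, f z * (-1:ℚ)^(ip z y) from rfl, Finset.mul_sum]
        apply Finset.sum_congr rfl; intro z _; ring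

lemma FF_supp {C0 : Finset (Vtx n)} {a b c d : ℕ}
    (h : IsEqPartition C0 a b c d) (hab : a + b = n) (hcd : c + d = n)
    (h3 : 3 * ((a : ℤ) - c) = -(n : ℤ)) (y : Vtx n) (hF : FF C0 b c y ≠ 0) :
    6 * wt y = 4 * n := by
  have h0 : ((n:ℚ) - 2 * wt y - ((a:ℚ) - (c:ℚ))) * FF C0 b c y = 0 := by
    linear_combination FF_eigen h hab hcd y
  rcases mul_eq_zero.mp h0 with h1 | h1
  · have h3' : 3 * ((a:ℚ) - (c:ℚ)) = -(n:ℚ) := by exact_mod_cast h3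
    have : (6:ℚ) * wt y = 4 * n := by linarith [h1, h3']
    exact_mod_cast this
  · exact absurd h1 hF

lemma inv_formula {C0 : Finset (Vtx n)} {b c : ℕ} (z : Vtx n) :
    ∑ y : Vtx n, FF C0 b c y * (-1:ℚ)^(ip z y) = (2^n : ℚ) * assoc C0 b c z := by
  set f := assoc C0 b c with hf
  calc ∑ y : Vtx n, FF C0 b c y * (-1:ℚ)^(ip z y)
      = ∑ y : Vtx n, ∑ z' : Vtx n, f z' * ((-1:ℚ)^(ip z' y) * (-1:ℚ)^(ip z y)) := by
        apply Finset.sum_congr rfl; intro y _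
        rw [show FF C0 b c y = ∑ w, f w * (-1:ℚ)^(ip w y) from rfl, Finset.sum_mul]
        apply Finset.sum_congr rfl; intro z' _; ring
    _ = ∑ z' : Vtx n, ∑ y : Vtx n, f z' * (-1:ℚ)^(ip (z' + z) y) := by
        rw [Finset.sum_comm]
        apply Finset.sum_congr rfl; intro z' _
        apply Finset.sum_congr rfl; intro y _
        rw [chi_add_left]
    _ = ∑ z' : Vtx n, f z' * (if z' + z = 0 then (2^n:ℚ) else 0) := by
        apply Finset.sum_congr rfl; intro z' _
        rw [← Finset.mul_sum, orth_sum]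
    _ = ∑ z' : Vtx n, (if z' = z then f z' * (2^n:ℚ) else 0) := by
        apply Finset.sum_congr rfl; intro z' _
        by_cases hzz : z' = z
        · rw [if_pos hzz, if_pos (vadd_eq_zero.mpr hzz)]
        · rw [if_neg hzz, if_neg (fun hc => hzz (vadd_eq_zero.mp hc)), mul_zero]
    _ = f z * (2^n:ℚ) := by rw [Finset.sum_ite_eq' Finset.univ z]; simp
    _ = (2^n : ℚ) * f z := by ring

def cc {n : ℕ} (C0 : Finset (Vtx n)) (b c : ℕ) (i : Fin n) (y : Vtx n) : ℚ :=
  FF C0 b c y * (1 + (-1:ℚ)^((y i).val))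

lemma H_eq {C0 : Finset (Vtx n)} {b c : ℕ} (i : Fin n) (z : Vtx n) :
    ∑ y : Vtx n, cc C0 b c i y * (-1:ℚ)^(ip z y)
    = (2^n : ℚ) * (assoc C0 b c z + assoc C0 b c (z + ee i)) := by
  have step : ∀ y : Vtx n, cc C0 b c i y * (-1:ℚ)^(ip z y)
      = FF C0 b c y * (-1:ℚ)^(ip z y) + FF C0 b c y * (-1:ℚ)^(ip (z + ee i) y) := by
    intro y
    rw [chi_add_left, ip_ee]
    unfold cc
    ring
  rw [Finset.sum_congr rfl (fun y _ => step y), Finset.sum_add_distrib,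
    inv_formula z, inv_formula (z + ee i)]
  ring

lemma triple_zero {C0 : Finset (Vtx n)} {a b c d : ℕ}
    (h : IsEqPartition C0 a b c d) (hab : a + b = n) (hcd : c + d = n)
    (h3 : 3 * ((a : ℤ) - c) = -(n : ℤ)) (i : Fin n) {y1 y2 y3 : Vtx n}
    (hs : y1 + y2 + y3 = 0) :
    cc C0 b c i y1 * cc C0 b c i y2 * cc C0 b c i y3 = 0 := by
  by_contra hne
  have hne1 : cc C0 b c i y1 ≠ 0 := fun h0 => hne (by rw [h0]; ring)
  have hne2 : cc C0 b c i y2 ≠ 0 := fun h0 => hne (by rw [h0]; ring)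
  have hne3 : cc C0 b c i y3 ≠ 0 := fun h0 => hne (by rw [h0]; ring)
  have hval : ∀ y : Vtx n, cc C0 b c i y ≠ 0 → (y i).val = 0 ∧ FF C0 b c y ≠ 0 := by
    intro y hy
    unfold cc at hy
    rcases mul_ne_zero_iff.mp hy with ⟨hF, hfac⟩
    refine ⟨?_, hF⟩
    rcases z2_cases (y i) with h0 | h1
    · rw [h0]; rfl
    · exfalso; apply hfac; rw [h1, z2_val_one]; ring
  obtain ⟨hv1, hF1⟩ := hval y1 hne1
  obtain ⟨hv2, hF2⟩ := hval y2 hne2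
  obtain ⟨hv3, hF3⟩ := hval y3 hne3
  have hw1 := FF_supp h hab hcd h3 y1 hF1
  have hw2 := FF_supp h hab hcd h3 y2 hF2
  have hw3 := FF_supp h hab hcd h3 y3 hF3
  -- total coordinate count
  set T : ℕ := ∑ l : Fin n, ((y1 l).val + (y2 l).val + (y3 l).val) with hT
  have hTsum : T = wt y1 + wt y2 + wt y3 := by
    rw [hT, wt_eq_sum, wt_eq_sum, wt_eq_sum, ← Finset.sum_add_distrib,
      ← Finset.sum_add_distrib]
  have hcoord : ∀ l, (y1 l).val + (y2 l).val + (y3 l).val ≤ 2 := by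
    intro l
    apply z2_triple_le
    have := congrFun hs l
    exact this
  have hi : (y1 i).val + (y2 i).val + (y3 i).val = 0 := by
    rw [hv1, hv2, hv3]
  have hsplit : T = ((y1 i).val + (y2 i).val + (y3 i).val)
      + ∑ l ∈ Finset.univ.erase i, ((y1 l).val + (y2 l).val + (y3 l).val) := by
    rw [hT]
    exact (Finset.add_sum_erase Finset.univ _ (Finset.mem_univ i)).symm
  have hbound : ∑ l ∈ Finset.univ.erase i, ((y1 l).val + (y2 l).val + (y3 l).val)
      ≤ (Finset.univ.erase i).card * 2 := by
    calc ∑ l ∈ Finset.univ.erase i, ((y1 l).val + (y2 l).val + (y3 l).val)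
        ≤ ∑ _l ∈ Finset.univ.erase i, 2 := Finset.sum_le_sum (fun l _ => hcoord l)
      _ = (Finset.univ.erase i).card * 2 := by rw [Finset.sum_const, smul_eq_mul]
  have hcard : (Finset.univ.erase i).card = n - 1 := by
    rw [Finset.card_erase_of_mem (Finset.mem_univ i), Finset.card_univ, Fintype.card_fin]
  have hn1 : 1 ≤ n := by
    rcases Nat.eq_zero_or_pos n with h0 | h0
    · exact absurd (h0 ▸ i).2 (by omega)
    · exact h0
  omega

lemma cube_zero {C0 : Finset (Vtx n)} {a b c d : ℕ}
    (h : IsEqPartition C0 a b c d) (hab : a + b = n) (hcd : c + d = n)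
    (h3 : 3 * ((a : ℤ) - c) = -(n : ℤ)) (i : Fin n) :
    ∑ z : Vtx n, (assoc C0 b c z + assoc C0 b c (z + ee i))^3 = 0 := by
  set f := assoc C0 b c with hf
  set q : Vtx n → ℚ := fun y => cc C0 b c i y with hq
  -- expand the cube of the inverse-Fourier expression
  have expand : ∀ z : Vtx n,
      ((2^n : ℚ) * (f z + f (z + ee i)))^3
      = ∑ y1 : Vtx n, ∑ y2 : Vtx n, ∑ y3 : Vtx n,
          (q y1 * q y2 * q y3) * (-1:ℚ)^(ip z (y1 + y2 + y3)) := by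
    intro z
    rw [← H_eq i z]
    rw [show (∑ y : Vtx n, q y * (-1:ℚ)^(ip z y))^3
        = (∑ y : Vtx n, q y * (-1:ℚ)^(ip z y)) * ((∑ y : Vtx n, q y * (-1:ℚ)^(ip z y))
          * (∑ y : Vtx n, q y * (-1:ℚ)^(ip z y))) from by ring]
    rw [Finset.sum_mul_sum]
    rw [Finset.sum_mul]
    apply Finset.sum_congr rfl; intro y1 _
    rw [Finset.mul_sum]
    apply Finset.sum_congr rfl; intro y2 _
    rw [Finset.mul_sum]
    apply Finset.sum_congr rfl; intro y3 _
    rw [chi_add_right, chi_add_right]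
    ring
  have main : ∑ z : Vtx n, ((2^n : ℚ) * (f z + f (z + ee i)))^3 = 0 := by
    rw [Finset.sum_congr rfl (fun z _ => expand z)]
    rw [Finset.sum_comm]
    apply Finset.sum_eq_zero; intro y1 _
    rw [Finset.sum_comm]
    apply Finset.sum_eq_zero; intro y2 _
    rw [Finset.sum_comm]
    apply Finset.sum_eq_zero; intro y3 _
    rw [← Finset.mul_sum, orth_sum']
    by_cases hz : y1 + y2 + y3 = 0
    · rw [if_pos hz, triple_zero h hab hcd h3 i hz]
      ring
    · rw [if_neg hz, mul_zero]
  have factored : ((2:ℚ)^n)^3 * ∑ z : Vtx n, (f z + f (z + ee i))^3 = 0 := by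
    rw [Finset.mul_sum, ← main]
    apply Finset.sum_congr rfl; intro z _
    ring
  have hpow : ((2:ℚ)^n)^3 ≠ 0 := by positivity
  rcases mul_eq_zero.mp factored with h0 | h0
  · exact absurd h0 hpow
  · exact h0

lemma quad {C0 : Finset (Vtx n)} {b c : ℕ} (x : Vtx n) :
    (assoc C0 b c x)^2 = ((b:ℚ) - (c:ℚ)) * assoc C0 b c x + (b:ℚ) * (c:ℚ) := by
  unfold assoc
  by_cases hx : x ∈ C0
  · rw [if_pos hx]; ring
  · rw [if_neg hx]; ring

lemma S_shape {C0 : Finset (Vtx n)} {a b c d : ℕ}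
    (h : IsEqPartition C0 a b c d) (hab : a + b = n) (hcd : c + d = n)
    (h3 : 3 * ((a : ℤ) - c) = -(n : ℤ)) (i : Fin n) :
    2 * (∑ z : Vtx n, (assoc C0 b c z)^3)
      + 6 * ((b:ℚ) * (c:ℚ)) * (∑ z : Vtx n, assoc C0 b c z)
      + 6 * ((b:ℚ) - (c:ℚ)) * (∑ z : Vtx n, assoc C0 b c z * assoc C0 b c (z + ee i)) = 0 := by
  set f := assoc C0 b c with hf
  have key := cube_zero h hab hcd h3 i
  have expand : ∀ z : Vtx n, (f z + f (z + ee i))^3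
      = f z ^ 3 + f (z + ee i) ^ 3
        + 3 * ((f z)^2 * f (z + ee i)) + 3 * (f z * (f (z + ee i))^2) := by
    intro z; ring
  rw [Finset.sum_congr rfl (fun z _ => expand z)] at key
  rw [Finset.sum_add_distrib, Finset.sum_add_distrib, Finset.sum_add_distrib] at key
  have ht1 : ∑ z : Vtx n, f (z + ee i) ^ 3 = ∑ z : Vtx n, f z ^ 3 :=
    sum_translate (ee i) (fun z => f z ^ 3)
  have ht2 : ∑ z : Vtx n, f (z + ee i) = ∑ z : Vtx n, f z :=
    sum_translate (ee i) f
  have hs1 : ∑ z : Vtx n, 3 * ((f z)^2 * f (z + ee i))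
      = 3 * (((b:ℚ) - (c:ℚ)) * (∑ z : Vtx n, f z * f (z + ee i))
        + (b:ℚ) * (c:ℚ) * (∑ z : Vtx n, f (z + ee i))) := by
    rw [Finset.mul_sum, Finset.mul_sum, ← Finset.sum_add_distrib, Finset.mul_sum]
    apply Finset.sum_congr rfl; intro z _
    rw [quad z]
    ring
  have hs2 : ∑ z : Vtx n, 3 * (f z * (f (z + ee i))^2)
      = 3 * (((b:ℚ) - (c:ℚ)) * (∑ z : Vtx n, f z * f (z + ee i))
        + (b:ℚ) * (c:ℚ) * (∑ z : Vtx n, f z)) := by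
    rw [Finset.mul_sum, Finset.mul_sum, ← Finset.sum_add_distrib, Finset.mul_sum]
    apply Finset.sum_congr rfl; intro z _
    rw [quad (z + ee i)]
    ring
  rw [ht1, hs1, hs2, ht2] at key
  linarith [key]

lemma S_const {C0 : Finset (Vtx n)} {a b c d : ℕ}
    (h : IsEqPartition C0 a b c d) (hab : a + b = n) (hcd : c + d = n)
    (hbc : b ≠ c) (h3 : 3 * ((a : ℤ) - c) = -(n : ℤ)) (i j : Fin n) :
    ∑ z : Vtx n, assoc C0 b c z * assoc C0 b c (z + ee i)
    = ∑ z : Vtx n, assoc C0 b c z * assoc C0 b c (z + ee j) := by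
  have hi := S_shape h hab hcd h3 i
  have hj := S_shape h hab hcd h3 j
  have hbc' : (b:ℚ) - (c:ℚ) ≠ 0 := by
    intro h0
    apply hbc
    have : (b:ℚ) = (c:ℚ) := by linarith
    exact_mod_cast this
  have h6 : (6:ℚ) * ((b:ℚ) - (c:ℚ)) ≠ 0 := by
    intro h0
    rcases mul_eq_zero.mp h0 with h1 | h1
    · norm_num at h1
    · exact hbc' h1
  have : 6 * ((b:ℚ) - (c:ℚ)) * (∑ z : Vtx n, assoc C0 b c z * assoc C0 b c (z + ee i))
      = 6 * ((b:ℚ) - (c:ℚ)) * (∑ z : Vtx n, assoc C0 b c z * assoc C0 b c (z + ee j)) := by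
    linarith [hi, hj]
  exact mul_left_cancel₀ h6 this

/- ## reduction of the statement -/

lemma z2_zero_val : ((0 : ZMod 2)).val = 0 := rfl

lemma filter_sum_eq {C0 : Finset (Vtx n)} {b c : ℕ} (i : Fin n) :
    ∑ x ∈ Finset.univ.filter (fun x : Vtx n => x i = 0), hat (assoc C0 b c) x ^ 2
    = ((∑ x : Vtx n, (FF C0 b c x)^2)
        + ∑ x : Vtx n, (FF C0 b c x)^2 * (-1:ℚ)^((x i).val)) / (2 * ((2:ℚ)^n)^2) := by
  have hhat : ∀ x : Vtx n, hat (assoc C0 b c) x = FF C0 b c x / 2^n := fun x => rfl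
  have step1 : ∑ x ∈ Finset.univ.filter (fun x : Vtx n => x i = 0), hat (assoc C0 b c) x ^ 2
      = (∑ x ∈ Finset.univ.filter (fun x : Vtx n => x i = 0), (FF C0 b c x)^2) / ((2:ℚ)^n)^2 := by
    rw [Finset.sum_div]
    apply Finset.sum_congr rfl; intro x _
    rw [hhat x, div_pow]
  rw [step1]
  have step2 : ∑ x ∈ Finset.univ.filter (fun x : Vtx n => x i = 0), (FF C0 b c x)^2
      = ((∑ x : Vtx n, (FF C0 b c x)^2)
          + ∑ x : Vtx n, (FF C0 b c x)^2 * (-1:ℚ)^((x i).val)) / 2 := by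
    rw [Finset.sum_filter, ← Finset.sum_add_distrib, Finset.sum_div]
    apply Finset.sum_congr rfl; intro x _
    rcases z2_cases (x i) with h0 | h1
    · rw [if_pos h0, h0, z2_zero_val, pow_zero]
      ring
    · rw [if_neg (by rw [h1]; decide), h1, z2_val_one, pow_one]
      ring
  rw [step2]
  ring

lemma corr_eval {C0 : Finset (Vtx n)} {b c : ℕ} (t : Vtx n) :
    ∑ x : Vtx n, (FF C0 b c x)^2 * (-1:ℚ)^(ip t x)
    = (2^n : ℚ) * ∑ z : Vtx n, assoc C0 b c z * assoc C0 b c (z + t) := by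
  set f := assoc C0 b c with hf
  calc ∑ x : Vtx n, (FF C0 b c x)^2 * (-1:ℚ)^(ip t x)
      = ∑ x : Vtx n, ∑ z : Vtx n, ∑ z' : Vtx n,
          (f z * f z') * ((-1:ℚ)^(ip z x) * (-1:ℚ)^(ip z' x) * (-1:ℚ)^(ip t x)) := by
        apply Finset.sum_congr rfl; intro x _
        rw [show (FF C0 b c x)^2 = FF C0 b c x * FF C0 b c x from sq (FF C0 b c x) ▸ by ring]
        rw [show FF C0 b c x = ∑ z, f z * (-1:ℚ)^(ip z x) from rfl]
        rw [Finset.sum_mul_sum, Finset.sum_mul]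
        apply Finset.sum_congr rfl; intro z _
        rw [Finset.sum_mul]
        apply Finset.sum_congr rfl; intro z' _
        ring
    _ = ∑ z : Vtx n, ∑ z' : Vtx n, (f z * f z')
          * (if z + z' + t = 0 then (2^n:ℚ) else 0) := by
        rw [Finset.sum_comm]
        apply Finset.sum_congr rfl; intro z _
        rw [Finset.sum_comm]
        apply Finset.sum_congr rfl; intro z' _
        rw [← Finset.mul_sum]
        congr 1
        rw [← orth_sum' (z + z' + t)]
        apply Finset.sum_congr rfl; intro x _
        rw [chi_add_right, chi_add_right, ip_comm x z, ip_comm x z', ip_comm x t]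
    _ = ∑ z : Vtx n, f z * f (z + t) * (2^n:ℚ) := by
        apply Finset.sum_congr rfl; intro z _
        have cond : ∀ z' : Vtx n, (z + z' + t = 0) ↔ (z' = z + t) := by
          intro z'
          constructor
          · intro h0
            have h1 : z' + (z + t) = 0 := by
              rw [← h0]; abel
            exact vadd_eq_zero.mp h1
          · intro h0
            rw [h0]
            have : z + (z + t) + t = (z + z) + (t + t) := by abel
            rw [this, vadd_self, vadd_self, add_zero]
        calc ∑ z' : Vtx n, (f z * f z') * (if z + z' + t = 0 then (2^n:ℚ) else 0)
            = ∑ z' : Vtx n, (if z' = z + t then (f z * f z') * (2^n:ℚ) else 0) := by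
              apply Finset.sum_congr rfl; intro z' _
              by_cases hz : z' = z + t
              · rw [if_pos hz, if_pos ((cond z').mpr hz)]
              · rw [if_neg hz, if_neg (fun hc => hz ((cond z').mp hc)), mul_zero]
          _ = f z * f (z + t) * (2^n:ℚ) := by
              rw [Finset.sum_ite_eq' Finset.univ (z + t)]
              simp
    _ = (2^n : ℚ) * ∑ z : Vtx n, f z * f (z + t) := by
        rw [Finset.mul_sum]
        apply Finset.sum_congr rfl; intro z _; ring

lemma coord_pow_eq_ip (i : Fin n) (x : Vtx n) :
    ((-1:ℚ))^((x i).val) = ((-1:ℚ))^(ip (ee i) x) := by rw [ip_ee]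

end S7

theorem stmt7 (n a b c d : ℕ) (C0 : Finset (Vtx n))
    (h : IsEqPartition C0 a b c d) (hab : a + b = n) (hcd : c + d = n)
    (hbc : b ≠ c) (h3 : 3 * ((a : ℤ) - c) = -(n : ℤ)) :
    ∀ i j : Fin n,
      ∑ x ∈ Finset.univ.filter (fun x : Vtx n => x i = 0),
          hat (assoc C0 b c) x ^ 2
        = ∑ x ∈ Finset.univ.filter (fun x : Vtx n => x j = 0),
            hat (assoc C0 b c) x ^ 2 := by
  intro i j
  rw [S7.filter_sum_eq i, S7.filter_sum_eq j]
  congr 2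
  have ei : ∑ x : Vtx n, (S7.FF C0 b c x)^2 * (-1:ℚ)^((x i).val)
      = (2^n : ℚ) * ∑ z : Vtx n, assoc C0 b c z * assoc C0 b c (z + S7.ee i) := by
    rw [Finset.sum_congr rfl (fun x _ => by rw [S7.coord_pow_eq_ip i x]), S7.corr_eval]
  have ej : ∑ x : Vtx n, (S7.FF C0 b c x)^2 * (-1:ℚ)^((x j).val)
      = (2^n : ℚ) * ∑ z : Vtx n, assoc C0 b c z * assoc C0 b c (z + S7.ee j) := by
    rw [Finset.sum_congr rfl (fun x _ => by rw [S7.coord_pow_eq_ip j x]), S7.corr_eval]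
  rw [ei, ej, S7.S_const h hab hcd hbc h3 i j]
end
end

section
/- Let (C_0,C_1) be an equitable partition of Q_n with quotient matrix [[a,b],[c,d]], b ≠ c, attaining a − c = −n/3. Then the number of edges of Q_n with endpoints in different cells and of direction i does not depend on i ∈ {1,…,n}. -/
attribute [local instance] Classical.propDecidable
noncomputable section

/-- The `i`-th standard basis vector. -/
def unitv {n : ℕ} (i : Fin n) : Vtx n := fun j => if j = i then 1 else 0

namespace Aux
open Finset

lemma zmod2_cases (a : ZMod 2) : a = 0 ∨ a = 1 := by revert a; decide

def E2 : ZMod 2 → ℚ := fun t => if t = 0 then 1 else -1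

lemma E2_add (s t : ZMod 2) : E2 (s + t) = E2 s * E2 t := by
  have h2 : (1 + 1 : ZMod 2) = 0 := by decide
  have h10 : (1 : ZMod 2) ≠ 0 := by decide
  rcases zmod2_cases s with hs | hs <;> rcases zmod2_cases t with ht | ht <;>
    subst hs <;> subst ht <;> simp [E2, h2, h10]

lemma E2_zero : E2 0 = 1 := rfl
lemma E2_one : E2 1 = -1 := by norm_num [E2]

lemma neg_one_pow_eq (m : ℕ) : (-1 : ℚ) ^ m = E2 (m : ZMod 2) := by
  induction m with
  | zero => simp [E2]
  | succ k ih => rw [pow_succ, ih, Nat.cast_add, Nat.cast_one, E2_add, E2_one]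

def ipz {n : ℕ} (x y : Vtx n) : ZMod 2 := ∑ i, x i * y i

lemma val_cast (a : ZMod 2) : ((a.val : ℕ) : ZMod 2) = a := by
  rcases zmod2_cases a with h | h <;> subst h <;> rfl

lemma ip_cast {n : ℕ} (x y : Vtx n) : ((ip x y : ℕ) : ZMod 2) = ipz x y := by
  rw [ip, ipz, Nat.cast_sum]
  exact Finset.sum_congr rfl (fun i _ => by rw [Nat.cast_mul, val_cast, val_cast])

def sg {n : ℕ} (x y : Vtx n) : ℚ := (-1) ^ ip x y

lemma sg_eq {n : ℕ} (x y : Vtx n) : sg x y = E2 (ipz x y) := by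
  rw [sg, neg_one_pow_eq, ip_cast]

lemma ipz_add_left {n : ℕ} (x z y : Vtx n) : ipz (x + z) y = ipz x y + ipz z y := by
  rw [ipz, ipz, ipz, ← Finset.sum_add_distrib]
  exact Finset.sum_congr rfl (fun i _ => by simp [add_mul])

lemma ipz_add_right {n : ℕ} (x y z : Vtx n) : ipz x (y + z) = ipz x y + ipz x z := by
  rw [ipz, ipz, ipz, ← Finset.sum_add_distrib]
  exact Finset.sum_congr rfl (fun i _ => by simp [mul_add])

lemma sg_add_left {n : ℕ} (x z y : Vtx n) : sg (x + z) y = sg x y * sg z y := by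
  rw [sg_eq, sg_eq, sg_eq, ipz_add_left, E2_add]

lemma sg_add_right {n : ℕ} (x y z : Vtx n) : sg x (y + z) = sg x y * sg x z := by
  rw [sg_eq, sg_eq, sg_eq, ipz_add_right, E2_add]

lemma ipz_unitv_left {n : ℕ} (i : Fin n) (y : Vtx n) : ipz (unitv i) y = y i := by
  rw [ipz, Finset.sum_eq_single i]
  · simp [unitv]
  · intro j _ hj; simp [unitv, hj]
  · simp

lemma ipz_unitv_right {n : ℕ} (s : Vtx n) (i : Fin n) : ipz s (unitv i) = s i := by
  rw [ipz, Finset.sum_eq_single i]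
  · simp [unitv]
  · intro j _ hj; simp [unitv, hj]
  · simp

lemma sg_unitv {n : ℕ} (i : Fin n) (y : Vtx n) : sg (unitv i) y = E2 (y i) := by
  rw [sg_eq, ipz_unitv_left]

lemma sg_zero_left {n : ℕ} (y : Vtx n) : sg 0 y = 1 := by
  rw [sg_eq]
  have h : ipz (0 : Vtx n) y = 0 := by
    rw [ipz]; exact Finset.sum_eq_zero (fun i _ => by
      show (0 : Vtx n) i * y i = 0
      show (0 : ZMod 2) * y i = 0
      ring)
  rw [h, E2_zero]

lemma sg_zero_right {n : ℕ} (x : Vtx n) : sg x 0 = 1 := by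
  rw [sg_eq]
  have h : ipz x (0 : Vtx n) = 0 := by
    rw [ipz]; exact Finset.sum_eq_zero (fun i _ => by
      show x i * (0 : ZMod 2) = 0
      ring)
  rw [h, E2_zero]

lemma add_self {n : ℕ} (v : Vtx n) : v + v = 0 := by
  funext i
  show v i + v i = 0
  rcases zmod2_cases (v i) with h | h <;> rw [h] <;> rfl

lemma add_eq_zero_iff {n : ℕ} (x s : Vtx n) : x + s = 0 ↔ x = s := by
  constructor
  · intro h
    have h2 : x + s + s = 0 + s := by rw [h]
    rwa [add_assoc, add_self, add_zero, zero_add] at h2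
  · intro h; rw [h, add_self]

lemma card_vtx (n : ℕ) : Fintype.card (Vtx n) = 2 ^ n := by
  simp [ZMod.card]

lemma orth {n : ℕ} (s : Vtx n) : ∑ y : Vtx n, sg s y = if s = 0 then (2:ℚ) ^ n else 0 := by
  by_cases hs : s = 0
  · simp only [hs, if_true]
    rw [Finset.sum_congr rfl (fun y _ => sg_zero_left y), Finset.sum_const, card_univ, card_vtx]
    simp
  · simp only [hs, if_false]
    obtain ⟨i, hi⟩ : ∃ i, s i ≠ 0 := by
      by_contra hc
      push_neg at hc
      exact hs (funext (fun i => hc i))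
    have hsi : s i = 1 := (zmod2_cases (s i)).resolve_left hi
    have key : ∑ y : Vtx n, sg s y = ∑ y : Vtx n, sg s (y + unitv i) :=
      (Equiv.sum_comp (Equiv.addRight (unitv i)) (sg s)).symm
    have hneg : ∀ y : Vtx n, sg s (y + unitv i) = - sg s y := by
      intro y
      rw [sg_add_right]
      have h1 : sg s (unitv i) = -1 := by
        rw [sg_eq, ipz_unitv_right, hsi, E2_one]
      rw [h1]; ring
    rw [Finset.sum_congr rfl (fun y _ => hneg y)] at key
    simp only [Finset.sum_neg_distrib] at key
    linarith

end Aux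
namespace Aux
open Finset

def FT {n : ℕ} (f : Vtx n → ℚ) (y : Vtx n) : ℚ := ∑ x : Vtx n, f x * sg x y

lemma shift_sum {n : ℕ} (g : Vtx n → ℚ) (v : Vtx n) :
    ∑ x : Vtx n, g (x + v) = ∑ x : Vtx n, g x :=
  Equiv.sum_comp (Equiv.addRight v) g

lemma inv1 {n : ℕ} (f : Vtx n → ℚ) (s : Vtx n) :
    ∑ y : Vtx n, FT f y * sg s y = 2 ^ n * f s := by
  have step1 : ∀ y : Vtx n, FT f y * sg s y = ∑ x : Vtx n, f x * sg (x + s) y := by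
    intro y
    rw [FT, Finset.sum_mul]
    exact Finset.sum_congr rfl (fun x _ => by rw [sg_add_left]; ring)
  rw [Finset.sum_congr rfl (fun y _ => step1 y), Finset.sum_comm]
  have step2 : ∀ x : Vtx n, ∑ y : Vtx n, f x * sg (x + s) y
      = if x = s then 2 ^ n * f x else 0 := by
    intro x
    rw [← Finset.mul_sum, orth]
    by_cases h : x = s
    · rw [if_pos ((add_eq_zero_iff x s).2 h), if_pos h]; ring
    · rw [if_neg (fun hc => h ((add_eq_zero_iff x s).1 hc)), if_neg h]; ring
  rw [Finset.sum_congr rfl (fun x _ => step2 x), Finset.sum_ite_eq' Finset.univ s]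
  simp

lemma T_eq {n : ℕ} (f : Vtx n → ℚ) (t : Vtx n) :
    ∑ y : Vtx n, ∑ z : Vtx n, FT f y * FT f z * FT f (y + z) * sg t (y + z)
      = 4 ^ n * ∑ x : Vtx n, f x * f (x + t) * f (x + t) := by
  have step1 : ∀ y z : Vtx n, FT f y * FT f z * FT f (y + z) * sg t (y + z)
      = ∑ x : Vtx n, f x * (FT f y * sg x y * sg t y) * (FT f z * sg x z * sg t z) := by
    intro y z
    have h1 : FT f (y + z) = ∑ x : Vtx n, f x * (sg x y * sg x z) := by
      rw [FT]; exact Finset.sum_congr rfl (fun x _ => by rw [sg_add_right])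
    rw [h1, sg_add_right]
    rw [Finset.mul_sum, Finset.sum_mul]
    exact Finset.sum_congr rfl (fun x _ => by ring)
  calc ∑ y : Vtx n, ∑ z : Vtx n, FT f y * FT f z * FT f (y + z) * sg t (y + z)
      = ∑ y : Vtx n, ∑ z : Vtx n, ∑ x : Vtx n,
          f x * (FT f y * sg x y * sg t y) * (FT f z * sg x z * sg t z) :=
        Finset.sum_congr rfl (fun y _ => Finset.sum_congr rfl (fun z _ => step1 y z))
    _ = ∑ y : Vtx n, ∑ x : Vtx n, ∑ z : Vtx n,
          f x * (FT f y * sg x y * sg t y) * (FT f z * sg x z * sg t z) :=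
        Finset.sum_congr rfl (fun y _ => Finset.sum_comm)
    _ = ∑ x : Vtx n, ∑ y : Vtx n, ∑ z : Vtx n,
          f x * (FT f y * sg x y * sg t y) * (FT f z * sg x z * sg t z) :=
        Finset.sum_comm
    _ = ∑ x : Vtx n, f x * (2 ^ n * f (x + t)) * (2 ^ n * f (x + t)) := by
        refine Finset.sum_congr rfl (fun x _ => ?_)
        have hA : ∑ y : Vtx n, FT f y * sg x y * sg t y = 2 ^ n * f (x + t) := by
          rw [Finset.sum_congr rfl (fun y (_ : y ∈ Finset.univ) =>
            show FT f y * sg x y * sg t y = FT f y * sg (x + t) y by rw [sg_add_left]; ring)]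
          exact inv1 f (x + t)
        calc ∑ y : Vtx n, ∑ z : Vtx n,
              f x * (FT f y * sg x y * sg t y) * (FT f z * sg x z * sg t z)
            = (∑ y : Vtx n, FT f y * sg x y * sg t y) *
              (∑ z : Vtx n, FT f z * sg x z * sg t z) * f x := by
              rw [Finset.sum_mul_sum, Finset.sum_mul]
              refine Finset.sum_congr rfl (fun y _ => ?_)
              rw [Finset.sum_mul]
              exact Finset.sum_congr rfl (fun z _ => by ring)
          _ = f x * (2 ^ n * f (x + t)) * (2 ^ n * f (x + t)) := by rw [hA]; ring
    _ = 4 ^ n * ∑ x : Vtx n, f x * f (x + t) * f (x + t) := by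
        rw [Finset.mul_sum]
        refine Finset.sum_congr rfl (fun x _ => ?_)
        have : (4 : ℚ) ^ n = 2 ^ n * 2 ^ n := by rw [← mul_pow]; norm_num
        rw [this]; ring

end Aux
namespace Aux
open Finset

lemma zm_one_ne_zero : (1 : ZMod 2) ≠ 0 := by decide
lemma zm_ne_iff (x y : ZMod 2) : x ≠ y ↔ y = x + 1 := by revert x y; decide
lemma zm_add_one_ne (x : ZMod 2) : x ≠ x + 1 := by revert x; decide

lemma unitv_apply_self {n : ℕ} (i : Fin n) : unitv i i = 1 := by simp [unitv]
lemma unitv_apply_ne {n : ℕ} {i j : Fin n} (h : j ≠ i) : unitv i j = 0 := by simp [unitv, h]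

lemma vtx_add_apply {n : ℕ} (x y : Vtx n) (j : Fin n) : (x + y) j = x j + y j := rfl

lemma adj_iff {n : ℕ} (x y : Vtx n) : adj x y ↔ ∃ i, y = x + unitv i := by
  constructor
  · intro h
    obtain ⟨i, hi⟩ := Finset.card_eq_one.1 h
    refine ⟨i, funext (fun j => ?_)⟩
    rw [vtx_add_apply]
    by_cases hj : j = i
    · subst hj
      have hmem : j ∈ Finset.univ.filter (fun k => x k ≠ y k) := by rw [hi]; simp
      rw [Finset.mem_filter] at hmem
      rw [unitv_apply_self]
      exact (zm_ne_iff _ _).1 hmem.2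
    · have hmem : j ∉ Finset.univ.filter (fun k => x k ≠ y k) := by
        rw [hi]; simp [hj]
      rw [Finset.mem_filter] at hmem
      push_neg at hmem
      rw [unitv_apply_ne hj, add_zero]
      exact (hmem (Finset.mem_univ j)).symm
  · rintro ⟨i, rfl⟩
    have hset : Finset.univ.filter (fun k => x k ≠ (x + unitv i) k) = {i} := by
      ext k
      rw [Finset.mem_filter, Finset.mem_singleton]
      constructor
      · rintro ⟨-, hk⟩
        by_contra hki
        rw [vtx_add_apply, unitv_apply_ne hki, add_zero] at hk
        exact hk rfl
      · rintro rfl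
        refine ⟨Finset.mem_univ k, ?_⟩
        rw [vtx_add_apply, unitv_apply_self]
        exact zm_add_one_ne (x k)
    rw [adj, hset, Finset.card_singleton]

lemma unitv_inj {n : ℕ} {i j : Fin n} (h : unitv (n := n) i = unitv j) : i = j := by
  by_contra hne
  have h1 := congrFun h i
  rw [unitv_apply_self, unitv_apply_ne hne] at h1
  exact zm_one_ne_zero h1

lemma nbr_card {n : ℕ} (C0 : Finset (Vtx n)) (x : Vtx n) :
    (Finset.univ.filter (fun i => x + unitv i ∈ C0)).card
      = (Finset.univ.filter (fun y => adj x y ∧ y ∈ C0)).card := by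
  refine Finset.card_bij (fun i _ => x + unitv i) ?_ ?_ ?_
  · intro i hi
    rw [Finset.mem_filter] at hi ⊢
    exact ⟨Finset.mem_univ _, (adj_iff x _).2 ⟨i, rfl⟩, hi.2⟩
  · intro i _ j _ hij
    exact unitv_inj (add_left_cancel hij)
  · intro y hy
    rw [Finset.mem_filter] at hy
    obtain ⟨i, rfl⟩ := (adj_iff x y).1 hy.2.1
    exact ⟨i, Finset.mem_filter.2 ⟨Finset.mem_univ _, hy.2.2⟩, rfl⟩

lemma wt_eq_sum {n : ℕ} (x : Vtx n) : (wt x : ℚ) = ∑ i, ((x i).val : ℚ) := by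
  rw [wt, Finset.card_filter, Nat.cast_sum]
  refine Finset.sum_congr rfl (fun i _ => ?_)
  have h0 : ((0 : ZMod 2).val : ℚ) = 0 := rfl
  have hv1 : ((1 : ZMod 2).val : ℚ) = 1 := rfl
  rcases zmod2_cases (x i) with h | h <;> rw [h] <;> simp [zm_one_ne_zero, h0, hv1]

lemma wt_le {n : ℕ} (x : Vtx n) : wt x ≤ n := by
  rw [wt]
  calc (Finset.univ.filter (fun i => x i = 1)).card ≤ Finset.univ.card :=
        Finset.card_filter_le _ _
    _ = n := by simp

lemma sum_sg_unitv {n : ℕ} (y : Vtx n) :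
    ∑ i : Fin n, sg (unitv i) y = (n : ℚ) - 2 * wt y := by
  have h1 : ∀ i : Fin n, sg (unitv i) y = 1 - 2 * ((y i).val : ℚ) := by
    intro i
    rw [sg_unitv]
    have h0 : ((0 : ZMod 2).val : ℚ) = 0 := rfl
    have hv1 : ((1 : ZMod 2).val : ℚ) = 1 := rfl
    rcases zmod2_cases (y i) with h | h <;> rw [h] <;> norm_num [E2, zm_one_ne_zero, h0, hv1]
  rw [Finset.sum_congr rfl (fun i _ => h1 i), Finset.sum_sub_distrib, Finset.sum_const]
  rw [← Finset.mul_sum, ← wt_eq_sum]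
  simp

end Aux
namespace Aux
open Finset

lemma eigen_pointwise {n a b c d : ℕ} {C0 : Finset (Vtx n)}
    (h : IsEqPartition C0 a b c d) (hab : a + b = n) (hcd : c + d = n) (x : Vtx n) :
    ∑ i : Fin n, assoc C0 b c (x + unitv i) = ((a : ℚ) - c) * assoc C0 b c x := by
  classical
  have hsplit : ∑ i : Fin n, assoc C0 b c (x + unitv i)
      = ((Finset.univ.filter (fun i : Fin n => x + unitv i ∈ C0)).card : ℚ) * b
        + ((Finset.univ.filter (fun i : Fin n => ¬(x + unitv i ∈ C0))).card : ℚ) * (-(c:ℚ)) := by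
    rw [show (fun i : Fin n => assoc C0 b c (x + unitv i))
        = fun i : Fin n => if x + unitv i ∈ C0 then (b:ℚ) else -(c:ℚ) from rfl]
    rw [Finset.sum_ite, Finset.sum_const, Finset.sum_const]
    simp [nsmul_eq_mul]
  have hk : (Finset.univ.filter (fun i : Fin n => x + unitv i ∈ C0)).card
      + (Finset.univ.filter (fun i : Fin n => ¬(x + unitv i ∈ C0))).card = n := by
    rw [Finset.card_filter_add_card_filter_not]
    simp
  by_cases hx : x ∈ C0
  · have hka : (Finset.univ.filter (fun i : Fin n => x + unitv i ∈ C0)).card = a := by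
      rw [nbr_card C0 x]; exact (h.1 x hx).1
    have hkb : (Finset.univ.filter (fun i : Fin n => ¬(x + unitv i ∈ C0))).card = b := by
      omega
    rw [hsplit, hka, hkb, show assoc C0 b c x = (b:ℚ) from by simp [assoc, hx]]
    ring
  · have hka : (Finset.univ.filter (fun i : Fin n => x + unitv i ∈ C0)).card = c := by
      rw [nbr_card C0 x]; exact (h.2 x hx).1
    have hkd : (Finset.univ.filter (fun i : Fin n => ¬(x + unitv i ∈ C0))).card = d := by
      omega
    rw [hsplit, hka, hkd, show assoc C0 b c x = -(c:ℚ) from by simp [assoc, hx]]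
    have hab' : (a:ℚ) + b = n := by exact_mod_cast hab
    have hcd' : (c:ℚ) + d = n := by exact_mod_cast hcd
    linear_combination (c:ℚ) * hab' - (c:ℚ) * hcd'

lemma F_eigen {n a b c d : ℕ} {C0 : Finset (Vtx n)}
    (h : IsEqPartition C0 a b c d) (hab : a + b = n) (hcd : c + d = n) (y : Vtx n) :
    ((n : ℚ) - 2 * wt y) * FT (assoc C0 b c) y = ((a : ℚ) - c) * FT (assoc C0 b c) y := by
  classical
  set f := assoc C0 b c with hf
  have step1 : ((a : ℚ) - c) * FT f y = ∑ x : Vtx n, (∑ i : Fin n, f (x + unitv i)) * sg x y := by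
    rw [FT, Finset.mul_sum]
    refine Finset.sum_congr rfl (fun x _ => ?_)
    rw [eigen_pointwise h hab hcd x]
    ring
  have step2 : ∀ i : Fin n, ∑ x : Vtx n, f (x + unitv i) * sg x y
      = sg (unitv i) y * FT f y := by
    intro i
    have hre : ∑ x : Vtx n, f (x + unitv i) * sg x y
        = ∑ x : Vtx n, f x * sg (x + unitv i) y := by
      have hcongr : ∀ x : Vtx n, f (x + unitv i) * sg x y
          = (fun w => f w * sg (w + unitv i) y) ((Equiv.addRight (unitv i)) x) := by
        intro x
        show f (x + unitv i) * sg x y = f (x + unitv i) * sg (x + unitv i + unitv i) y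
        rw [add_assoc, add_self, add_zero]
      rw [Finset.sum_congr rfl (fun x _ => hcongr x),
        Equiv.sum_comp (Equiv.addRight (unitv i)) (fun w => f w * sg (w + unitv i) y)]
    rw [hre, FT, Finset.mul_sum]
    refine Finset.sum_congr rfl (fun x _ => ?_)
    rw [sg_add_left]
    ring
  have main : ∑ x : Vtx n, (∑ i : Fin n, f (x + unitv i)) * sg x y
      = ((n : ℚ) - 2 * wt y) * FT f y := by
    calc ∑ x : Vtx n, (∑ i : Fin n, f (x + unitv i)) * sg x y
        = ∑ x : Vtx n, ∑ i : Fin n, f (x + unitv i) * sg x y :=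
          Finset.sum_congr rfl (fun x _ => by rw [Finset.sum_mul])
      _ = ∑ i : Fin n, ∑ x : Vtx n, f (x + unitv i) * sg x y := Finset.sum_comm
      _ = ∑ i : Fin n, sg (unitv i) y * FT f y :=
          Finset.sum_congr rfl (fun i _ => step2 i)
      _ = (∑ i : Fin n, sg (unitv i) y) * FT f y := by rw [Finset.sum_mul]
      _ = ((n : ℚ) - 2 * wt y) * FT f y := by rw [sum_sg_unitv]
  rw [step1, main]

lemma support {n a b c d : ℕ} {C0 : Finset (Vtx n)}
    (h : IsEqPartition C0 a b c d) (hab : a + b = n) (hcd : c + d = n)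
    (h3 : 3 * ((a : ℤ) - c) = -(n : ℤ)) (y : Vtx n)
    (hF : FT (assoc C0 b c) y ≠ 0) : 3 * wt y = 2 * n := by
  have hcancel : (n : ℚ) - 2 * wt y = (a : ℚ) - c :=
    mul_right_cancel₀ hF (F_eigen h hab hcd y)
  have h3q : 3 * ((a : ℚ) - c) = -(n : ℚ) := by exact_mod_cast h3
  have : ((3 * wt y : ℕ) : ℚ) = ((2 * n : ℕ) : ℚ) := by push_cast; linarith
  exact_mod_cast this

lemma wt_eq_sum_nat {n : ℕ} (x : Vtx n) : wt x = ∑ i, (x i).val := by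
  rw [wt, Finset.card_filter]
  refine Finset.sum_congr rfl (fun i _ => ?_)
  rcases zmod2_cases (x i) with h | h <;> rw [h] <;> decide

lemma triangle {n : ℕ} (y z : Vtx n) (hy : 3 * wt y = 2 * n) (hz : 3 * wt z = 2 * n)
    (hyz : 3 * wt (y + z) = 2 * n) (i : Fin n) :
    E2 (y i) + E2 (z i) + E2 ((y + z) i) = -1 := by
  classical
  set s : Fin n → ℕ := fun k => (y k).val + (z k).val + ((y + z) k).val with hs
  have hle : ∀ k, s k ≤ 2 := by
    intro k
    simp only [hs, vtx_add_apply]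
    rcases zmod2_cases (y k) with h1 | h1 <;> rcases zmod2_cases (z k) with h2 | h2 <;>
      rw [h1, h2] <;> decide
  have hsum : ∑ k, s k = 2 * n := by
    have hexp : ∑ k, s k = wt y + wt z + wt (y + z) := by
      simp only [hs]
      rw [Finset.sum_add_distrib, Finset.sum_add_distrib,
        wt_eq_sum_nat, wt_eq_sum_nat, wt_eq_sum_nat]
    omega
  have hall : ∀ k, s k = 2 := by
    have h2n : ∑ k : Fin n, (2 : ℕ) = 2 * n := by
      rw [Finset.sum_const]; simp [Nat.smul_one_eq_cast]; ring
    have := (Finset.sum_eq_sum_iff_of_le (fun k _ => hle k)).1 (by rw [hsum, h2n])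
    intro k; exact this k (Finset.mem_univ k)
  have hi := hall i
  simp only [hs, vtx_add_apply] at hi ⊢
  have e00 : ((0 : ZMod 2) + 0) = 0 := by decide
  have e01 : ((0 : ZMod 2) + 1) = 1 := by decide
  have e10 : ((1 : ZMod 2) + 0) = 1 := by decide
  have e11 : ((1 : ZMod 2) + 1) = 0 := by decide
  rcases zmod2_cases (y i) with h1 | h1 <;> rcases zmod2_cases (z i) with h2 | h2 <;>
    rw [h1, h2] <;> rw [h1, h2] at hi <;>
    first
      | (exfalso; revert hi; decide)
      | (simp only [e00, e01, e10, e11, E2_zero, E2_one]; norm_num)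

end Aux
namespace Aux
open Finset

lemma A_const {n a b c d : ℕ} {C0 : Finset (Vtx n)}
    (h : IsEqPartition C0 a b c d) (hab : a + b = n) (hcd : c + d = n)
    (h3 : 3 * ((a : ℤ) - c) = -(n : ℤ)) (k : Fin n) :
    3 * (∑ x : Vtx n, assoc C0 b c x * assoc C0 b c (x + unitv k) * assoc C0 b c (x + unitv k))
      = -(∑ x : Vtx n, assoc C0 b c x * assoc C0 b c x * assoc C0 b c x) := by
  classical
  set f := assoc C0 b c with hf
  set u := unitv k with hu
  have h4n : ((4 : ℚ)) ^ n ≠ 0 := by positivity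
  set P : Vtx n → Vtx n → ℚ := fun y z => FT f y * FT f z * FT f (y + z) with hP
  have TA : ∑ y : Vtx n, ∑ z : Vtx n, P y z * sg u (y + z)
      = 4 ^ n * ∑ x : Vtx n, f x * f (x + u) * f (x + u) := T_eq f u
  have T0 : ∑ y : Vtx n, ∑ z : Vtx n, P y z
      = 4 ^ n * ∑ x : Vtx n, f x * f x * f x := by
    have := T_eq f 0
    simp only [sg_zero_left, mul_one, add_zero] at this
    exact this
  have sym1 : ∑ y : Vtx n, ∑ z : Vtx n, P y z * sg u y
      = ∑ y : Vtx n, ∑ z : Vtx n, P y z * sg u (y + z) := by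
    rw [Finset.sum_comm]
    rw [show (∑ y : Vtx n, ∑ z : Vtx n, P y z * sg u (y + z))
        = ∑ z : Vtx n, ∑ y : Vtx n, P y z * sg u (y + z) from Finset.sum_comm]
    refine Finset.sum_congr rfl (fun z _ => ?_)
    have hcongr : ∀ y : Vtx n, P y z * sg u (y + z)
        = (fun w => P w z * sg u w) ((Equiv.addRight z) y) := by
      intro y
      show P y z * sg u (y + z) = P (y + z) z * sg u (y + z)
      have : P (y + z) z = P y z := by
        simp only [hP]
        rw [add_assoc, add_self, add_zero]
        ring
      rw [this]
    rw [Finset.sum_congr rfl (fun y _ => hcongr y),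
      Equiv.sum_comp (Equiv.addRight z) (fun w => P w z * sg u w)]
  have sym2 : ∑ y : Vtx n, ∑ z : Vtx n, P y z * sg u z
      = ∑ y : Vtx n, ∑ z : Vtx n, P y z * sg u (y + z) := by
    refine Finset.sum_congr rfl (fun y _ => ?_)
    have hcongr : ∀ z : Vtx n, P y z * sg u (y + z)
        = (fun w => P y w * sg u w) ((Equiv.addLeft y) z) := by
      intro z
      show P y z * sg u (y + z) = P y (y + z) * sg u (y + z)
      have : P y (y + z) = P y z := by
        simp only [hP]
        rw [← add_assoc, add_self, zero_add]
        ring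
      rw [this]
    rw [show (∑ z : Vtx n, P y z * sg u (y + z))
        = ∑ z : Vtx n, (fun w => P y w * sg u w) ((Equiv.addLeft y) z) from
        Finset.sum_congr rfl (fun z _ => hcongr z),
      Equiv.sum_comp (Equiv.addLeft y) (fun w => P y w * sg u w)]
  have point : ∀ y z : Vtx n, P y z * (sg u y + sg u z + sg u (y + z)) = -(P y z) := by
    intro y z
    by_cases hP0 : P y z = 0
    · rw [hP0]; ring
    · have h1 : FT f y * FT f z * FT f (y + z) ≠ 0 := hP0
      have hy : FT f y ≠ 0 := left_ne_zero_of_mul (left_ne_zero_of_mul h1)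
      have hz : FT f z ≠ 0 := right_ne_zero_of_mul (left_ne_zero_of_mul h1)
      have hyz : FT f (y + z) ≠ 0 := right_ne_zero_of_mul h1
      have wy := support h hab hcd h3 y hy
      have wz := support h hab hcd h3 z hz
      have wyz := support h hab hcd h3 (y + z) hyz
      have htri := triangle y z wy wz wyz k
      rw [hu, sg_unitv, sg_unitv, sg_unitv, htri]
      ring
  have hadd : ∀ (A B : Vtx n → Vtx n → ℚ),
      ((∑ y : Vtx n, ∑ z : Vtx n, A y z) + ∑ y : Vtx n, ∑ z : Vtx n, B y z)
        = ∑ y : Vtx n, ∑ z : Vtx n, (A y z + B y z) := by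
    intro A B
    rw [← Finset.sum_add_distrib]
    exact Finset.sum_congr rfl (fun y _ => by rw [← Finset.sum_add_distrib])
  have comb : 3 * (∑ y : Vtx n, ∑ z : Vtx n, P y z * sg u (y + z))
      = -(∑ y : Vtx n, ∑ z : Vtx n, P y z) := by
    have step : 3 * (∑ y : Vtx n, ∑ z : Vtx n, P y z * sg u (y + z))
        = ∑ y : Vtx n, ∑ z : Vtx n,
            (P y z * sg u y + P y z * sg u z + P y z * sg u (y + z)) := by
      rw [← hadd, ← hadd, sym1, sym2]
      ring
    rw [step]
    have : ∀ y z : Vtx n,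
        P y z * sg u y + P y z * sg u z + P y z * sg u (y + z) = -(P y z) := by
      intro y z
      have := point y z
      linarith [point y z]
    rw [Finset.sum_congr rfl (fun y _ => Finset.sum_congr rfl (fun z _ => this y z))]
    simp [Finset.sum_neg_distrib]
  rw [TA, T0] at comb
  exact mul_left_cancel₀ h4n (by linear_combination comb)

lemma half_card {n : ℕ} (C0 : Finset (Vtx n)) (k : Fin n) :
    (Finset.univ.filter (fun x : Vtx n => ¬(x ∈ C0 ↔ x + unitv k ∈ C0))).card
      = 2 * (Finset.univ.filter (fun x : Vtx n =>
          x k = 0 ∧ ¬(x ∈ C0 ↔ x + unitv k ∈ C0))).card := by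
  classical
  have hflip : ∀ x : Vtx n, x + unitv k + unitv k = x := by
    intro x; rw [add_assoc, add_self, add_zero]
  have hsplit :
      (Finset.univ.filter (fun x : Vtx n => ¬(x ∈ C0 ↔ x + unitv k ∈ C0))).card
      = (Finset.univ.filter (fun x : Vtx n =>
          ¬(x ∈ C0 ↔ x + unitv k ∈ C0) ∧ x k = 0)).card
        + (Finset.univ.filter (fun x : Vtx n =>
          ¬(x ∈ C0 ↔ x + unitv k ∈ C0) ∧ ¬(x k = 0))).card := by
    rw [← Finset.filter_filter, ← Finset.filter_filter,
      Finset.card_filter_add_card_filter_not]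
  have hbij : (Finset.univ.filter (fun x : Vtx n =>
        ¬(x ∈ C0 ↔ x + unitv k ∈ C0) ∧ ¬(x k = 0))).card
      = (Finset.univ.filter (fun x : Vtx n =>
        ¬(x ∈ C0 ↔ x + unitv k ∈ C0) ∧ x k = 0)).card := by
    refine Finset.card_bij (fun x _ => x + unitv k) ?_ ?_ ?_
    · intro x hx
      rw [Finset.mem_filter] at hx ⊢
      obtain ⟨-, hcomp, hk1⟩ := hx
      have hx1 : x k = 1 := (zmod2_cases (x k)).resolve_left hk1
      refine ⟨Finset.mem_univ _, ?_, ?_⟩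
      · rw [hflip]
        tauto
      · show (x + unitv k) k = 0
        rw [vtx_add_apply, unitv_apply_self, hx1]
        decide
    · intro x _ y _ hxy
      have := congrArg (fun w => w + unitv k) hxy
      simpa [hflip] using this
    · intro y hy
      rw [Finset.mem_filter] at hy
      obtain ⟨-, hcomp, hk0⟩ := hy
      refine ⟨y + unitv k, ?_, hflip y⟩
      rw [Finset.mem_filter]
      refine ⟨Finset.mem_univ _, ?_, ?_⟩
      · rw [hflip]
        tauto
      · rw [vtx_add_apply, unitv_apply_self, hk0]
        decide
  have hcomm : (Finset.univ.filter (fun x : Vtx n =>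
        x k = 0 ∧ ¬(x ∈ C0 ↔ x + unitv k ∈ C0))).card
      = (Finset.univ.filter (fun x : Vtx n =>
        ¬(x ∈ C0 ↔ x + unitv k ∈ C0) ∧ x k = 0)).card := by
    have hseteq : (Finset.univ.filter (fun x : Vtx n =>
          x k = 0 ∧ ¬(x ∈ C0 ↔ x + unitv k ∈ C0)))
        = (Finset.univ.filter (fun x : Vtx n =>
          ¬(x ∈ C0 ↔ x + unitv k ∈ C0) ∧ x k = 0)) := by
      ext x
      simp only [Finset.mem_filter]
      tauto
    exact congrArg Finset.card hseteq
  rw [hsplit, hbij, ← hcomm]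
  exact (two_mul _).symm

end Aux
theorem stmt8 (n a b c d : ℕ) (C0 : Finset (Vtx n))
    (h : IsEqPartition C0 a b c d) (hab : a + b = n) (hcd : c + d = n)
    (hbc : b ≠ c) (h3 : 3 * ((a : ℤ) - c) = -(n : ℤ)) :
    ∀ i j : Fin n,
      (Finset.univ.filter (fun x : Vtx n =>
          x i = 0 ∧ ¬(x ∈ C0 ↔ x + unitv i ∈ C0))).card
        = (Finset.univ.filter (fun x : Vtx n =>
            x j = 0 ∧ ¬(x ∈ C0 ↔ x + unitv j ∈ C0))).card := by
  intro i j
  classical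
  open Aux in
  have hn : 0 < n := i.pos
  set f := assoc C0 b c with hf
  have hbcq : ((b : ℚ) - c) ≠ 0 := sub_ne_zero.2 (by exact_mod_cast hbc)
  have hbcsq : (((b : ℚ) + c)) ^ 2 ≠ 0 := by
    have hbc0 : b + c ≠ 0 := by omega
    have : ((b : ℚ) + c) ≠ 0 := by
      have := Nat.cast_ne_zero (R := ℚ).2 hbc0
      push_cast at this
      exact this
    exact pow_ne_zero 2 this
  have hF0 : ∑ x : Vtx n, f x = 0 := by
    have hFT : Aux.FT f 0 = ∑ x : Vtx n, f x := by
      rw [Aux.FT]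
      exact Finset.sum_congr rfl (fun x _ => by rw [Aux.sg_zero_right, mul_one])
    by_contra hne
    have hFne : Aux.FT f 0 ≠ 0 := by rw [hFT]; exact hne
    have hsup := Aux.support h hab hcd h3 0 hFne
    have hwt0 : wt (0 : Vtx n) = 0 := by
      rw [wt]
      rw [Finset.filter_false_of_mem (fun i _ => by
        show ¬((0 : Vtx n) i = 1)
        show ¬((0 : ZMod 2) = 1)
        decide)]
      exact Finset.card_empty
    rw [hwt0] at hsup
    omega
  have hsq : ∀ v : Vtx n, f v * f v = ((b : ℚ) - c) * f v + b * c := by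
    intro v
    by_cases hv : v ∈ C0 <;> simp only [hf, assoc, hv, if_true, if_false] <;> ring
  have hAc : ∀ k : Fin n, ∑ x : Vtx n, f x * f (x + unitv k) * f (x + unitv k)
      = ((b : ℚ) - c) * ∑ x : Vtx n, f x * f (x + unitv k) := by
    intro k
    have hpt : ∀ x : Vtx n, f x * f (x + unitv k) * f (x + unitv k)
        = ((b : ℚ) - c) * (f x * f (x + unitv k)) + (b * c) * f x := by
      intro x
      rw [mul_assoc, hsq (x + unitv k)]
      ring
    rw [Finset.sum_congr rfl (fun x _ => hpt x), Finset.sum_add_distrib,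
      ← Finset.mul_sum, ← Finset.mul_sum, hF0, mul_zero, add_zero]
  have hc_eq : ∑ x : Vtx n, f x * f (x + unitv i) = ∑ x : Vtx n, f x * f (x + unitv j) := by
    have hi := Aux.A_const h hab hcd h3 i
    have hj := Aux.A_const h hab hcd h3 j
    rw [hAc i] at hi
    rw [hAc j] at hj
    have h3ne : (3 : ℚ) ≠ 0 := by norm_num
    exact mul_left_cancel₀ hbcq (mul_left_cancel₀ h3ne (hi.trans hj.symm))
  have hdiff : ∀ k : Fin n, ∑ x : Vtx n, (f x - f (x + unitv k)) ^ 2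
      = ((b : ℚ) + c) ^ 2 * ((Finset.univ.filter
          (fun x : Vtx n => ¬(x ∈ C0 ↔ x + unitv k ∈ C0))).card : ℚ) := by
    intro k
    have hpt : ∀ x : Vtx n, (f x - f (x + unitv k)) ^ 2
        = if ¬(x ∈ C0 ↔ x + unitv k ∈ C0) then ((b : ℚ) + c) ^ 2 else 0 := by
      intro x
      by_cases h1 : x ∈ C0 <;> by_cases h2 : x + unitv k ∈ C0 <;>
        simp only [hf, assoc, h1, h2, if_true, if_false, iff_true, iff_false,
          not_not, not_true, not_false_iff] <;>
        ring
    rw [Finset.sum_congr rfl (fun x _ => hpt x), Finset.sum_ite, Finset.sum_const,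
      Finset.sum_const_zero, add_zero, nsmul_eq_mul]
    ring
  have hexpand : ∀ k : Fin n, ∑ x : Vtx n, (f x - f (x + unitv k)) ^ 2
      = 2 * (∑ x : Vtx n, f x * f x) - 2 * (∑ x : Vtx n, f x * f (x + unitv k)) := by
    intro k
    have hshift : ∑ x : Vtx n, f (x + unitv k) * f (x + unitv k)
        = ∑ x : Vtx n, f x * f x :=
      Aux.shift_sum (fun v => f v * f v) (unitv k)
    have hpt : ∀ x : Vtx n, (f x - f (x + unitv k)) ^ 2
        = f x * f x + f (x + unitv k) * f (x + unitv k) - 2 * (f x * f (x + unitv k)) :=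
      fun x => by ring
    rw [Finset.sum_congr rfl (fun x _ => hpt x), Finset.sum_sub_distrib,
      Finset.sum_add_distrib, hshift, ← Finset.mul_sum]
    ring
  have hMq : (((Finset.univ.filter
        (fun x : Vtx n => ¬(x ∈ C0 ↔ x + unitv i ∈ C0))).card : ℚ))
      = (((Finset.univ.filter
        (fun x : Vtx n => ¬(x ∈ C0 ↔ x + unitv j ∈ C0))).card : ℚ)) := by
    have e1 := (hdiff i).symm.trans (hexpand i)
    have e2 := (hdiff j).symm.trans (hexpand j)
    rw [hc_eq] at e1
    exact mul_left_cancel₀ hbcsq (e1.trans e2.symm)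
  have hM : (Finset.univ.filter
        (fun x : Vtx n => ¬(x ∈ C0 ↔ x + unitv i ∈ C0))).card
      = (Finset.univ.filter
        (fun x : Vtx n => ¬(x ∈ C0 ↔ x + unitv j ∈ C0))).card := by
    exact_mod_cast hMq
  have h2i := Aux.half_card C0 i
  have h2j := Aux.half_card C0 j
  refine Nat.eq_of_mul_eq_mul_left (show 0 < 2 by norm_num) ?_
  rw [← h2i, ← h2j, hM]
end
end

section
/- If there exists an equitable partition of Q_n with quotient matrix [[a,b],[c,d]] with b ≠ c and a − c = −n/3, then 3 divides b/gcd(b,c) or 3 divides c/gcd(b,c). -/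
attribute [local instance] Classical.propDecidable
noncomputable section

-- basic ZMod 2 facts
lemma zmod2_cases (a : ZMod 2) : a = 0 ∨ a = 1 := by
  fin_cases a
  · exact Or.inl rfl
  · exact Or.inr rfl

lemma zmod2_val_le (a : ZMod 2) : a.val ≤ 1 := by
  rcases zmod2_cases a with h | h <;> subst h <;> decide

lemma zmod2_add_self (a : ZMod 2) : a + a = 0 := by
  rcases zmod2_cases a with h | h <;> subst h <;> decide

lemma vtx_add_self {n : ℕ} (x : Vtx n) : x + x = 0 := by
  funext i; exact zmod2_add_self (x i)

lemma vtx_add_add_cancel {n : ℕ} (t z : Vtx n) : t + (t + z) = z := by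
  rw [← add_assoc, vtx_add_self, zero_add]

lemma vtx_add_eq_zero_iff {n : ℕ} (x y : Vtx n) : x + y = 0 ↔ y = x := by
  constructor
  · intro h
    calc y = x + (x + y) := (vtx_add_add_cancel x y).symm
    _ = x + 0 := by rw [h]
    _ = x := add_zero x
  · intro h; rw [h]; exact vtx_add_self x

lemma ip_symm {n : ℕ} (x y : Vtx n) : ip x y = ip y x := by
  unfold ip; exact Finset.sum_congr rfl (fun i _ => mul_comm _ _)

lemma neg_one_pow_mod_two (k : ℕ) : (-1 : ℚ) ^ k = (-1) ^ (k % 2) := by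
  conv_lhs => rw [← Nat.div_add_mod k 2]
  rw [pow_add, pow_mul]
  norm_num

lemma zmod2_val_add_mod (a b : ZMod 2) : (a + b).val % 2 = (a.val + b.val) % 2 := by
  rcases zmod2_cases a with h | h <;> rcases zmod2_cases b with h' | h' <;>
    subst h <;> subst h' <;> decide

lemma ip_add_left_mod {n : ℕ} (x z y : Vtx n) :
    ip (x + z) y % 2 = (ip x y + ip z y) % 2 := by
  unfold ip
  rw [Finset.sum_nat_mod, ← Finset.sum_add_distrib, Finset.sum_nat_mod (f := fun i => (x i).val * (y i).val + (z i).val * (y i).val)]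
  congr 1
  refine Finset.sum_congr rfl (fun i _ => ?_)
  show ((x i + z i).val * (y i).val) % 2 = _
  rcases zmod2_cases (x i) with h | h <;> rcases zmod2_cases (z i) with h' | h' <;>
    rcases zmod2_cases (y i) with h'' | h'' <;> rw [h, h', h''] <;> decide

lemma char_add_left {n : ℕ} (x z y : Vtx n) :
    (-1 : ℚ) ^ ip (x + z) y = (-1) ^ ip x y * (-1) ^ ip z y := by
  rw [neg_one_pow_mod_two (ip (x+z) y), ip_add_left_mod, ← neg_one_pow_mod_two, pow_add]

-- chunk 2
def ee {n : ℕ} (i : Fin n) : Vtx n := fun j => if j = i then 1 else 0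

lemma ip_ee {n : ℕ} (i : Fin n) (y : Vtx n) : ip (ee i) y = (y i).val := by
  unfold ip ee
  rw [Finset.sum_eq_single i]
  · simp [ZMod.val_one]
  · intro j _ hj; simp [hj]
  · intro h; exact absurd (Finset.mem_univ i) h

lemma ip_zero_left {n : ℕ} (y : Vtx n) : ip (0 : Vtx n) y = 0 := by
  unfold ip; simp

lemma card_vtx (n : ℕ) : Fintype.card (Vtx n) = 2 ^ n := by
  simp [Fintype.card_fun]

lemma sum_char {n : ℕ} (y : Vtx n) :
    ∑ x : Vtx n, (-1 : ℚ) ^ ip x y = if y = 0 then (2 ^ n : ℚ) else 0 := by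
  by_cases hy : y = 0
  · subst hy
    have h0 : ∀ x : Vtx n, ip x (0 : Vtx n) = 0 := by
      intro x; rw [ip_symm]; exact ip_zero_left x
    simp [h0, card_vtx]
  · simp only [hy, if_false]
    obtain ⟨i, hi⟩ : ∃ i, y i ≠ 0 := by
      by_contra hc
      push_neg at hc
      exact hy (funext fun i => hc i)
    have hyi : (y i).val = 1 := by
      rcases zmod2_cases (y i) with h | h
      · exact absurd h hi
      · rw [h]; decide
    have key : ∀ x : Vtx n, (-1 : ℚ) ^ ip (x + ee i) y = -((-1) ^ ip x y) := by
      intro x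
      rw [char_add_left, ip_ee, hyi]
      ring
    have hrw : ∑ x : Vtx n, (-1 : ℚ) ^ ip x y = ∑ x : Vtx n, (-1 : ℚ) ^ ip (x + ee i) y := by
      exact (Fintype.sum_equiv (Equiv.addRight (ee i)) _ _ (fun x => rfl)).symm
    have hneg : ∑ x : Vtx n, (-1 : ℚ) ^ ip x y = -∑ x : Vtx n, (-1 : ℚ) ^ ip x y := by
      conv_lhs => rw [hrw]
      rw [← Finset.sum_neg_distrib]
      exact Finset.sum_congr rfl (fun x _ => key x)
    linarith

lemma sum_char' {n : ℕ} (w : Vtx n) :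
    ∑ z : Vtx n, (-1 : ℚ) ^ ip w z = if w = 0 then (2 ^ n : ℚ) else 0 := by
  rw [← sum_char w]
  exact Finset.sum_congr rfl (fun z _ => by rw [ip_symm])

-- adjacency structure
lemma self_ne_add_iff {n : ℕ} (x v : Vtx n) (j : Fin n) :
    x j ≠ x j + v j ↔ v j ≠ 0 := by
  constructor
  · intro h hv; exact h (by rw [hv, add_zero])
  · intro hv h
    apply hv
    have := congrArg (fun t => x j + t) h.symm
    simpa [← add_assoc, vtx_add_self] using this

lemma filter_add_ee {n : ℕ} (x : Vtx n) (i : Fin n) :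
    (Finset.univ.filter (fun j => x j ≠ (x + ee i) j)) = {i} := by
  ext j
  simp only [Finset.mem_filter, Finset.mem_univ, true_and, Finset.mem_singleton]
  show (x j ≠ x j + ee i j) ↔ j = i
  rw [self_ne_add_iff]
  unfold ee
  by_cases hj : j = i <;> simp [hj]

lemma adj_add_ee {n : ℕ} (x : Vtx n) (i : Fin n) : adj x (x + ee i) := by
  unfold adj; rw [filter_add_ee]; simp

lemma ee_inj {n : ℕ} : Function.Injective (ee (n := n)) := by
  intro i j hij
  by_contra hne
  have h1 : ee i i = (1 : ZMod 2) := by unfold ee; simp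
  have h2 : ee j i = (0 : ZMod 2) := by unfold ee; simp [hne]
  rw [hij] at h1
  rw [h1] at h2
  exact one_ne_zero h2

lemma adj_exists_ee {n : ℕ} {x y : Vtx n} (h : adj x y) : ∃ i, y = x + ee i := by
  unfold adj at h
  obtain ⟨i, hi⟩ := Finset.card_eq_one.mp h
  refine ⟨i, funext fun j => ?_⟩
  show y j = x j + ee i j
  by_cases hj : j = i
  · have hji : x j ≠ y j := by
      have hm : j ∈ Finset.univ.filter (fun k => x k ≠ y k) := by rw [hi, hj]; simp
      simpa using hm
    have heej : ee (n:=n) i j = 1 := by unfold ee; simp [hj]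
    rw [heej]
    rcases zmod2_cases (x j) with h1 | h1 <;> rcases zmod2_cases (y j) with h2 | h2 <;>
      rw [h1, h2] <;> rw [h1, h2] at hji <;>
      first | rfl | decide | exact absurd rfl hji
  · have hji : ¬(x j ≠ y j) := by
      intro hc
      have hm : j ∈ Finset.univ.filter (fun k => x k ≠ y k) := by simp [hc]
      rw [hi] at hm
      exact hj (Finset.mem_singleton.mp hm)
    push_neg at hji
    have hz : ee (n:=n) i j = 0 := by
      unfold ee; simp [hj]
    rw [hz, add_zero, hji]

lemma char_add_right {n : ℕ} (x y z : Vtx n) :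
    (-1 : ℚ) ^ ip x (y + z) = (-1) ^ ip x y * (-1) ^ ip x z := by
  rw [ip_symm x (y + z), char_add_left, ip_symm y x, ip_symm z x]

-- chunk 3 : unnormalized Fourier transform
def Fu {n : ℕ} (f : Vtx n → ℚ) (y : Vtx n) : ℚ := ∑ z, f z * (-1 : ℚ) ^ ip z y

lemma corr_eq {n : ℕ} (f : Vtx n → ℚ) (u : Vtx n) :
    ∑ t : Vtx n, Fu f t * Fu f t * (-1 : ℚ) ^ ip u t
      = 2 ^ n * ∑ x : Vtx n, f x * f (x + u) := by
  have expand : ∀ t : Vtx n, Fu f t * Fu f t * (-1 : ℚ) ^ ip u t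
      = ∑ x : Vtx n, ∑ x' : Vtx n, f x * f x' * (-1 : ℚ) ^ ip (x + x' + u) t := by
    intro t
    unfold Fu
    rw [Finset.sum_mul_sum, Finset.sum_mul]
    refine Finset.sum_congr rfl (fun x _ => ?_)
    rw [Finset.sum_mul]
    refine Finset.sum_congr rfl (fun x' _ => ?_)
    rw [char_add_left (x + x') u t, char_add_left x x' t]
    ring
  calc ∑ t : Vtx n, Fu f t * Fu f t * (-1 : ℚ) ^ ip u t
      = ∑ t : Vtx n, ∑ x : Vtx n, ∑ x' : Vtx n,
          f x * f x' * (-1 : ℚ) ^ ip (x + x' + u) t :=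
        Finset.sum_congr rfl (fun t _ => expand t)
    _ = ∑ x : Vtx n, ∑ x' : Vtx n, ∑ t : Vtx n,
          f x * f x' * (-1 : ℚ) ^ ip (x + x' + u) t := by
        rw [Finset.sum_comm]
        exact Finset.sum_congr rfl (fun x _ => Finset.sum_comm)
    _ = ∑ x : Vtx n, ∑ x' : Vtx n,
          f x * f x' * (if x + x' + u = 0 then (2 ^ n : ℚ) else 0) := by
        refine Finset.sum_congr rfl (fun x _ => Finset.sum_congr rfl (fun x' _ => ?_))
        rw [← Finset.mul_sum, sum_char']
    _ = ∑ x : Vtx n, ∑ x' : Vtx n,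
          (if x' = x + u then f x * f x' * (2 ^ n : ℚ) else 0) := by
        refine Finset.sum_congr rfl (fun x _ => Finset.sum_congr rfl (fun x' _ => ?_))
        have hiff : x + x' + u = 0 ↔ x' = x + u := by
          rw [show x + x' + u = x' + (x + u) by abel, vtx_add_eq_zero_iff]
          exact eq_comm
        by_cases hc : x' = x + u
        · rw [if_pos (hiff.mpr hc), if_pos hc]
        · rw [if_neg (fun h => hc (hiff.mp h)), if_neg hc, mul_zero]
    _ = ∑ x : Vtx n, f x * f (x + u) * (2 ^ n : ℚ) := by
        refine Finset.sum_congr rfl (fun x _ => ?_)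
        rw [Finset.sum_ite_eq' Finset.univ (x + u)]
        simp
    _ = 2 ^ n * ∑ x : Vtx n, f x * f (x + u) := by
        rw [Finset.mul_sum]
        exact Finset.sum_congr rfl (fun x _ => by ring)

lemma conv_eq {n : ℕ} (f : Vtx n → ℚ) (t : Vtx n) :
    ∑ z : Vtx n, Fu f z * Fu f (z + t)
      = 2 ^ n * ∑ x : Vtx n, f x * f x * (-1 : ℚ) ^ ip x t := by
  have expand : ∀ z : Vtx n, Fu f z * Fu f (z + t)
      = ∑ x : Vtx n, ∑ x' : Vtx n,
          f x * f x' * (-1 : ℚ) ^ ip x' t * (-1 : ℚ) ^ ip (x + x') z := by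
    intro z
    unfold Fu
    rw [Finset.sum_mul_sum]
    refine Finset.sum_congr rfl (fun x _ => Finset.sum_congr rfl (fun x' _ => ?_))
    rw [char_add_right x' z t, char_add_left x x' z]
    ring
  calc ∑ z : Vtx n, Fu f z * Fu f (z + t)
      = ∑ z : Vtx n, ∑ x : Vtx n, ∑ x' : Vtx n,
          f x * f x' * (-1 : ℚ) ^ ip x' t * (-1 : ℚ) ^ ip (x + x') z :=
        Finset.sum_congr rfl (fun z _ => expand z)
    _ = ∑ x : Vtx n, ∑ x' : Vtx n, ∑ z : Vtx n,
          f x * f x' * (-1 : ℚ) ^ ip x' t * (-1 : ℚ) ^ ip (x + x') z := by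
        rw [Finset.sum_comm]
        exact Finset.sum_congr rfl (fun x _ => Finset.sum_comm)
    _ = ∑ x : Vtx n, ∑ x' : Vtx n,
          f x * f x' * (-1 : ℚ) ^ ip x' t * (if x + x' = 0 then (2 ^ n : ℚ) else 0) := by
        refine Finset.sum_congr rfl (fun x _ => Finset.sum_congr rfl (fun x' _ => ?_))
        rw [← Finset.mul_sum]
        congr 1
        have : ∑ z : Vtx n, (-1 : ℚ) ^ ip (x + x') z = if x + x' = 0 then (2^n : ℚ) else 0 :=
          sum_char' (x + x')
        exact this
    _ = ∑ x : Vtx n, ∑ x' : Vtx n,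
          (if x' = x then f x * f x' * (-1 : ℚ) ^ ip x' t * (2 ^ n : ℚ) else 0) := by
        refine Finset.sum_congr rfl (fun x _ => Finset.sum_congr rfl (fun x' _ => ?_))
        by_cases hc : x' = x
        · rw [if_pos ((vtx_add_eq_zero_iff x x').mpr hc), if_pos hc]
        · rw [if_neg (fun h => hc ((vtx_add_eq_zero_iff x x').mp h)), if_neg hc, mul_zero]
    _ = ∑ x : Vtx n, f x * f x * (-1 : ℚ) ^ ip x t * (2 ^ n : ℚ) := by
        refine Finset.sum_congr rfl (fun x _ => ?_)
        rw [Finset.sum_ite_eq' Finset.univ x]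
        simp
    _ = 2 ^ n * ∑ x : Vtx n, f x * f x * (-1 : ℚ) ^ ip x t := by
        rw [Finset.mul_sum]
        exact Finset.sum_congr rfl (fun x _ => by ring)

lemma vtx_add_cancel_right {n : ℕ} (x v : Vtx n) : x + v + v = x := by
  rw [add_assoc, vtx_add_self, add_zero]

section Partition
variable {n a b c d : ℕ} {C0 : Finset (Vtx n)}

lemma nbr_count_mem (h : IsEqPartition C0 a b c d) {x : Vtx n} (hx : x ∈ C0) :
    (Finset.univ.filter (fun i : Fin n => x + ee i ∈ C0)).card = a := by
  rw [← (h.1 x hx).1]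
  apply Finset.card_bij (fun i _ => x + ee i)
  · intro i hi
    simp only [Finset.mem_filter, Finset.mem_univ, true_and] at hi ⊢
    exact ⟨adj_add_ee x i, hi⟩
  · intro i _ j _ hij
    exact ee_inj (add_left_cancel hij)
  · intro y hy
    simp only [Finset.mem_filter, Finset.mem_univ, true_and] at hy
    obtain ⟨i, rfl⟩ := adj_exists_ee hy.1
    exact ⟨i, by simp [hy.2], rfl⟩

lemma nbr_count_not_mem (h : IsEqPartition C0 a b c d) {x : Vtx n} (hx : x ∉ C0) :
    (Finset.univ.filter (fun i : Fin n => x + ee i ∈ C0)).card = c := by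
  rw [← (h.2 x hx).1]
  apply Finset.card_bij (fun i _ => x + ee i)
  · intro i hi
    simp only [Finset.mem_filter, Finset.mem_univ, true_and] at hi ⊢
    exact ⟨adj_add_ee x i, hi⟩
  · intro i _ j _ hij
    exact ee_inj (add_left_cancel hij)
  · intro y hy
    simp only [Finset.mem_filter, Finset.mem_univ, true_and] at hy
    obtain ⟨i, rfl⟩ := adj_exists_ee hy.1
    exact ⟨i, by simp [hy.2], rfl⟩

lemma sum_nbrs (x : Vtx n) :
    ∑ i : Fin n, assoc C0 b c (x + ee i)
      = ((Finset.univ.filter (fun i : Fin n => x + ee i ∈ C0)).card : ℚ) * b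
        + ((n : ℚ) - (Finset.univ.filter (fun i : Fin n => x + ee i ∈ C0)).card) * (-(c:ℚ)) := by
  classical
  have hsplit : ∑ i : Fin n, assoc C0 b c (x + ee i)
      = ∑ i ∈ Finset.univ.filter (fun i : Fin n => x + ee i ∈ C0), (b : ℚ)
        + ∑ i ∈ Finset.univ.filter (fun i : Fin n => ¬(x + ee i ∈ C0)), (-(c:ℚ)) := by
    rw [← Finset.sum_filter_add_sum_filter_not Finset.univ (fun i => x + ee i ∈ C0)]
    congr 1
    · exact Finset.sum_congr rfl (fun i hi => by
        simp only [Finset.mem_filter] at hi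
        simp [assoc, hi.2])
    · exact Finset.sum_congr rfl (fun i hi => by
        simp only [Finset.mem_filter] at hi
        simp [assoc, hi.2])
  rw [hsplit, Finset.sum_const, Finset.sum_const]
  have hcard : (Finset.univ.filter (fun i : Fin n => ¬(x + ee i ∈ C0))).card
      = n - (Finset.univ.filter (fun i : Fin n => x + ee i ∈ C0)).card := by
    have := Finset.card_filter_add_card_filter_not
      (s := (Finset.univ : Finset (Fin n))) (p := fun i => x + ee i ∈ C0)
    simp only [Finset.card_univ, Fintype.card_fin] at this
    omega
  rw [hcard]
  have hle : (Finset.univ.filter (fun i : Fin n => x + ee i ∈ C0)).card ≤ n := by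
    have := Finset.card_filter_le (Finset.univ : Finset (Fin n))
      (fun i => x + ee i ∈ C0)
    simpa using this
  rw [nsmul_eq_mul, nsmul_eq_mul, Nat.cast_sub hle]

lemma eigen (h : IsEqPartition C0 a b c d) (hab : a + b = n) (hcd : c + d = n) :
    ∀ x : Vtx n, ∑ i : Fin n, assoc C0 b c (x + ee i)
      = ((a : ℚ) - (c : ℚ)) * assoc C0 b c x := by
  intro x
  rw [sum_nbrs]
  by_cases hx : x ∈ C0
  · rw [nbr_count_mem h hx]
    have hn : (n : ℚ) = (a : ℚ) + b := by exact_mod_cast congrArg (Nat.cast (R := ℚ)) hab.symm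
    simp only [assoc, hx, if_pos]
    rw [hn]; ring
  · rw [nbr_count_not_mem h hx]
    have hn : (n : ℚ) = (c : ℚ) + d := by exact_mod_cast congrArg (Nat.cast (R := ℚ)) hcd.symm
    simp only [assoc, hx, if_neg, if_false]
    have hbd : (b : ℚ) - d = (c : ℚ) - a := by
      have h1 : (a : ℚ) + b = n := by exact_mod_cast hab
      have h2 : (c : ℚ) + d = n := by exact_mod_cast hcd
      linarith
    rw [hn]
    nlinarith [hbd]

end Partition

-- weight as a sum of values
lemma wt_eq_sum_val {n : ℕ} (y : Vtx n) : wt y = ∑ i, (y i).val := by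
  unfold wt
  rw [Finset.card_filter]
  refine Finset.sum_congr rfl (fun i _ => ?_)
  by_cases h : y i = 1
  · rw [if_pos h, h]
    decide
  · have h0 : y i = 0 := by
      rcases zmod2_cases (y i) with h' | h'
      · exact h'
      · exact absurd h' h
    rw [if_neg h, h0]
    decide

lemma sum_sign {n : ℕ} (y : Vtx n) :
    ∑ i : Fin n, (-1 : ℚ) ^ ((y i).val) = (n : ℚ) - 2 * wt y := by
  have hterm : ∀ i, (-1 : ℚ) ^ ((y i).val) = 1 - 2 * ((y i).val : ℚ) := by
    intro i
    rcases zmod2_cases (y i) with h | h <;> rw [h] <;>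
      first
      | (rw [show (0 : ZMod 2).val = 0 from rfl]; norm_num)
      | (rw [show (1 : ZMod 2).val = 1 from rfl]; norm_num)
  rw [Finset.sum_congr rfl (fun i _ => hterm i)]
  rw [Finset.sum_sub_distrib, Finset.sum_const, Finset.card_univ, Fintype.card_fin,
    wt_eq_sum_val, nsmul_eq_mul, ← Finset.mul_sum]
  push_cast
  ring

-- generic: if g is an eigenfunction for the "sum over neighbours" operator
lemma support_lemma {n : ℕ} (g : Vtx n → ℚ) (lam : ℚ)
    (heig : ∀ x : Vtx n, ∑ i : Fin n, g (x + ee i) = lam * g x)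
    (y : Vtx n) (hy : Fu g y ≠ 0) : ((n : ℚ) - 2 * wt y) = lam := by
  have key : ∑ x : Vtx n, (∑ i : Fin n, g (x + ee i)) * (-1 : ℚ) ^ ip x y
      = ((n : ℚ) - 2 * wt y) * Fu g y := by
    have swap : ∑ x : Vtx n, (∑ i : Fin n, g (x + ee i)) * (-1 : ℚ) ^ ip x y
        = ∑ i : Fin n, ∑ x : Vtx n, g (x + ee i) * (-1 : ℚ) ^ ip x y := by
      have e1 : ∑ x : Vtx n, (∑ i : Fin n, g (x + ee i)) * (-1 : ℚ) ^ ip x y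
          = ∑ x : Vtx n, ∑ i : Fin n, g (x + ee i) * (-1 : ℚ) ^ ip x y :=
        Finset.sum_congr rfl (fun x _ => Finset.sum_mul _ _ _)
      rw [e1]
      exact Finset.sum_comm
    have inner : ∀ i : Fin n, ∑ x : Vtx n, g (x + ee i) * (-1 : ℚ) ^ ip x y
        = (-1 : ℚ) ^ ((y i).val) * Fu g y := by
      intro i
      have reindex : ∑ x : Vtx n, g (x + ee i) * (-1 : ℚ) ^ ip x y
          = ∑ x : Vtx n, g x * (-1 : ℚ) ^ ip (x + ee i) y := by
        apply Fintype.sum_equiv (Equiv.addRight (ee i))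
        intro x
        show g (x + ee i) * (-1 : ℚ) ^ ip x y = g (x + ee i) * (-1 : ℚ) ^ ip (x + ee i + ee i) y
        rw [vtx_add_cancel_right]
      rw [reindex]
      unfold Fu
      rw [Finset.mul_sum]
      refine Finset.sum_congr rfl (fun x _ => ?_)
      rw [char_add_left x (ee i) y, ip_ee]
      ring
    rw [swap, Finset.sum_congr rfl (fun i _ => inner i), ← Finset.sum_mul, sum_sign]
  have key2 : ∑ x : Vtx n, (∑ i : Fin n, g (x + ee i)) * (-1 : ℚ) ^ ip x y
      = lam * Fu g y := by
    rw [Finset.sum_congr rfl (fun x _ => by rw [heig x])]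
    unfold Fu
    rw [Finset.mul_sum]
    exact Finset.sum_congr rfl (fun x _ => by ring)
  have := key.symm.trans key2
  exact mul_right_cancel₀ hy this

-- covering lemma: triples of weight-(2n/3) vectors summing to zero
lemma zmod2_triple_val (p q r : ZMod 2) (h : p + q + r = 0) :
    p.val + q.val + r.val = 0 ∨ p.val + q.val + r.val = 2 := by
  rcases zmod2_cases p with hp | hp <;> rcases zmod2_cases q with hq | hq <;>
    rcases zmod2_cases r with hr | hr <;> subst hp <;> subst hq <;> subst hr <;>
    first | (left; decide) | (right; decide) | (exfalso; revert h; decide)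

lemma cover_lemma {n : ℕ} (y₁ y₂ y₃ : Vtx n) (hsum : y₁ + y₂ + y₃ = 0)
    (h1 : 3 * wt y₁ = 2 * n) (h2 : 3 * wt y₂ = 2 * n) (h3 : 3 * wt y₃ = 2 * n)
    (i : Fin n) : (y₁ i).val + (y₂ i).val + (y₃ i).val = 2 := by
  set s : Fin n → ℕ := fun j => (y₁ j).val + (y₂ j).val + (y₃ j).val with hs
  have hcases : ∀ j, s j = 0 ∨ s j = 2 := by
    intro j
    apply zmod2_triple_val
    have := congrFun hsum j
    simpa using this
  have hsumtot : ∑ j, s j = 2 * n := by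
    have : ∑ j, s j = wt y₁ + wt y₂ + wt y₃ := by
      rw [wt_eq_sum_val, wt_eq_sum_val, wt_eq_sum_val, hs]
      rw [← Finset.sum_add_distrib, ← Finset.sum_add_distrib]
    rw [this]
    omega
  by_contra hne
  have hi0 : s i = 0 := by
    rcases hcases i with h | h
    · exact h
    · exact absurd h hne
  have hlt : ∑ j, s j < ∑ j : Fin n, 2 := by
    apply Finset.sum_lt_sum
    · intro j _
      rcases hcases j with h | h <;> omega
    · exact ⟨i, Finset.mem_univ i, by omega⟩
  rw [Finset.sum_const, Finset.card_univ, Fintype.card_fin, smul_eq_mul] at hlt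
  omega

lemma vtx_cancel_right' {n : ℕ} (t z : Vtx n) : (t + z) + t = z := by
  rw [add_comm t z, add_assoc, vtx_add_self, add_zero]

section Margin
variable {n : ℕ} (f : Vtx n → ℚ) (β γ : ℚ)

lemma conv_eval (hsq : ∀ x, f x * f x = β * f x + γ) (t : Vtx n) :
    ∑ z : Vtx n, Fu f z * Fu f (z + t)
      = 2 ^ n * (β * Fu f t + γ * (if t = 0 then (2 ^ n : ℚ) else 0)) := by
  rw [conv_eq]
  congr 1
  have h1 : ∑ x : Vtx n, f x * f x * (-1 : ℚ) ^ ip x t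
      = ∑ x : Vtx n, (β * (f x * (-1 : ℚ) ^ ip x t) + γ * (-1 : ℚ) ^ ip x t) := by
    refine Finset.sum_congr rfl (fun x _ => ?_)
    rw [hsq x]; ring
  rw [h1, Finset.sum_add_distrib, ← Finset.mul_sum, ← Finset.mul_sum, sum_char]
  rfl

lemma margin_eq (hsq : ∀ x, f x * f x = β * f x + γ)
    (hsupp : ∀ y : Vtx n, Fu f y ≠ 0 → 3 * wt y = 2 * n)
    (hF0 : Fu f 0 = 0) (hβ : β ≠ 0) (i : Fin n) :
    3 * (∑ t : Vtx n, (((t i).val : ℚ)) * (Fu f t * Fu f t))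
      = 2 * (∑ t : Vtx n, Fu f t * Fu f t) := by
  have hcw0 : (((0 : Vtx n) i).val : ℚ) = 0 := by norm_num
  -- step 1: the weighted double sum, evaluated via the convolution identity
  have eval1 : ∑ t : Vtx n, (((t i).val : ℚ)) * Fu f t * (∑ z : Vtx n, Fu f z * Fu f (z + t))
      = 2 ^ n * β * (∑ t : Vtx n, (((t i).val : ℚ)) * (Fu f t * Fu f t)) := by
    have hpt : ∀ t : Vtx n, (((t i).val : ℚ)) * Fu f t * (∑ z : Vtx n, Fu f z * Fu f (z + t))
        = 2 ^ n * β * ((((t i).val : ℚ)) * (Fu f t * Fu f t))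
          + 2 ^ n * γ * ((((t i).val : ℚ)) * Fu f t * (if t = 0 then (2 ^ n : ℚ) else 0)) := by
      intro t
      rw [conv_eval f β γ hsq t]
      ring
    rw [Finset.sum_congr rfl (fun t _ => hpt t), Finset.sum_add_distrib]
    have hzero : ∑ t : Vtx n,
        2 ^ n * γ * ((((t i).val : ℚ)) * Fu f t * (if t = 0 then (2 ^ n : ℚ) else 0)) = 0 := by
      apply Finset.sum_eq_zero
      intro t _
      by_cases ht : t = 0
      · subst ht
        rw [hcw0]
        ring
      · rw [if_neg ht]
        ring
    rw [hzero, add_zero, ← Finset.mul_sum]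
  -- step 0: the unweighted double sum
  have eval0 : ∑ t : Vtx n, Fu f t * (∑ z : Vtx n, Fu f z * Fu f (z + t))
      = 2 ^ n * β * (∑ t : Vtx n, Fu f t * Fu f t) := by
    have hpt : ∀ t : Vtx n, Fu f t * (∑ z : Vtx n, Fu f z * Fu f (z + t))
        = 2 ^ n * β * (Fu f t * Fu f t)
          + 2 ^ n * γ * (Fu f t * (if t = 0 then (2 ^ n : ℚ) else 0)) := by
      intro t
      rw [conv_eval f β γ hsq t]
      ring
    rw [Finset.sum_congr rfl (fun t _ => hpt t), Finset.sum_add_distrib]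
    have hzero : ∑ t : Vtx n, 2 ^ n * γ * (Fu f t * (if t = 0 then (2 ^ n : ℚ) else 0)) = 0 := by
      apply Finset.sum_eq_zero
      intro t _
      by_cases ht : t = 0
      · subst ht
        rw [hF0]
        ring
      · rw [if_neg ht]
        ring
    rw [hzero, add_zero, ← Finset.mul_sum]
  -- double-sum forms
  have form1 : ∑ t : Vtx n, (((t i).val : ℚ)) * Fu f t * (∑ z : Vtx n, Fu f z * Fu f (z + t))
      = ∑ t : Vtx n, ∑ z : Vtx n, (((t i).val : ℚ)) * (Fu f t * Fu f z * Fu f (z + t)) := by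
    refine Finset.sum_congr rfl (fun t _ => ?_)
    rw [Finset.mul_sum]
    exact Finset.sum_congr rfl (fun z _ => by ring)
  have form0 : ∑ t : Vtx n, Fu f t * (∑ z : Vtx n, Fu f z * Fu f (z + t))
      = ∑ t : Vtx n, ∑ z : Vtx n, Fu f t * Fu f z * Fu f (z + t) := by
    refine Finset.sum_congr rfl (fun t _ => ?_)
    rw [Finset.mul_sum]
    exact Finset.sum_congr rfl (fun z _ => by ring)
  -- symmetrisation
  have sym2 : ∑ t : Vtx n, ∑ z : Vtx n, (((z i).val : ℚ)) * (Fu f t * Fu f z * Fu f (z + t))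
      = ∑ t : Vtx n, ∑ z : Vtx n, (((t i).val : ℚ)) * (Fu f t * Fu f z * Fu f (z + t)) := by
    rw [Finset.sum_comm]
    refine Finset.sum_congr rfl (fun z _ => Finset.sum_congr rfl (fun t _ => ?_))
    rw [show z + t = t + z from add_comm z t]
    ring
  have sym3 : ∑ t : Vtx n, ∑ z : Vtx n, (((z i).val : ℚ)) * (Fu f t * Fu f z * Fu f (z + t))
      = ∑ t : Vtx n, ∑ z : Vtx n, ((((t + z) i).val : ℚ)) * (Fu f t * Fu f z * Fu f (z + t)) := by
    refine Finset.sum_congr rfl (fun t _ => ?_)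
    refine Fintype.sum_equiv (Equiv.addLeft t)
      (fun z => (((z i).val : ℚ)) * (Fu f t * Fu f z * Fu f (z + t)))
      (fun z => ((((t + z) i).val : ℚ)) * (Fu f t * Fu f z * Fu f (z + t)))
      (fun z => ?_)
    show (((z i).val : ℚ)) * (Fu f t * Fu f z * Fu f (z + t))
        = ((((t + (t + z)) i).val : ℚ)) * (Fu f t * Fu f (t + z) * Fu f ((t + z) + t))
    rw [vtx_add_add_cancel, vtx_cancel_right', show t + z = z + t from add_comm t z]
    ring
  -- pointwise coefficient identity on the support
  have coeff : ∀ t z : Vtx n,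
      ((((t i).val : ℚ)) + (((z i).val : ℚ)) + ((((t + z) i).val : ℚ)))
          * (Fu f t * Fu f z * Fu f (z + t))
        = 2 * (Fu f t * Fu f z * Fu f (z + t)) := by
    intro t z
    by_cases h1 : Fu f t = 0
    · rw [h1]; ring
    by_cases h2 : Fu f z = 0
    · rw [h2]; ring
    by_cases h3 : Fu f (z + t) = 0
    · rw [h3]; ring
    have w1 := hsupp t h1
    have w2 := hsupp z h2
    have w3 : 3 * wt (t + z) = 2 * n := by
      rw [show t + z = z + t from add_comm t z]
      exact hsupp (z + t) h3
    have hsum0 : t + z + (t + z) = 0 := vtx_add_self (t + z)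
    have hc := cover_lemma t z (t + z) hsum0 w1 w2 w3 i
    have hcQ : (((t i).val : ℚ)) + (((z i).val : ℚ)) + ((((t + z) i).val : ℚ)) = 2 := by
      exact_mod_cast congrArg (Nat.cast (R := ℚ)) hc
    rw [hcQ]
  -- assemble
  have main : 3 * (2 ^ n * β * (∑ t : Vtx n, (((t i).val : ℚ)) * (Fu f t * Fu f t)))
      = 2 * (2 ^ n * β * (∑ t : Vtx n, Fu f t * Fu f t)) := by
    rw [← eval1, ← eval0, form1, form0]
    have lhs3 : (3 : ℚ) * ∑ t : Vtx n, ∑ z : Vtx n,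
        (((t i).val : ℚ)) * (Fu f t * Fu f z * Fu f (z + t))
        = ∑ t : Vtx n, ∑ z : Vtx n,
            ((((t i).val : ℚ)) + (((z i).val : ℚ)) + ((((t + z) i).val : ℚ)))
              * (Fu f t * Fu f z * Fu f (z + t)) := by
      have split : ∀ t z : Vtx n,
          ((((t i).val : ℚ)) + (((z i).val : ℚ)) + ((((t + z) i).val : ℚ)))
            * (Fu f t * Fu f z * Fu f (z + t))
          = (((t i).val : ℚ)) * (Fu f t * Fu f z * Fu f (z + t))
            + (((z i).val : ℚ)) * (Fu f t * Fu f z * Fu f (z + t))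
            + ((((t + z) i).val : ℚ)) * (Fu f t * Fu f z * Fu f (z + t)) := by
        intro t z; ring
      rw [Finset.sum_congr rfl (fun t _ => Finset.sum_congr rfl (fun z _ => split t z))]
      rw [Finset.sum_congr rfl (fun t (_ : t ∈ Finset.univ) => Finset.sum_add_distrib),
        Finset.sum_add_distrib]
      rw [Finset.sum_congr rfl (fun t (_ : t ∈ Finset.univ) => Finset.sum_add_distrib),
        Finset.sum_add_distrib]
      rw [sym2, ← sym3, sym2]
      ring
    have rhs2 : ∑ t : Vtx n, ∑ z : Vtx n,
        ((((t i).val : ℚ)) + (((z i).val : ℚ)) + ((((t + z) i).val : ℚ)))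
          * (Fu f t * Fu f z * Fu f (z + t))
        = 2 * ∑ t : Vtx n, ∑ z : Vtx n, Fu f t * Fu f z * Fu f (z + t) := by
      rw [Finset.sum_congr rfl (fun t _ => Finset.sum_congr rfl (fun z _ => coeff t z))]
      rw [Finset.mul_sum]
      exact Finset.sum_congr rfl (fun t _ => (Finset.mul_sum _ _ _).symm)
    rw [lhs3, rhs2]
  have hne : (2 : ℚ) ^ n * β ≠ 0 := by
    apply mul_ne_zero _ hβ
    positivity
  have h3' : (2:ℚ) ^ n * β * (3 * (∑ t : Vtx n, (((t i).val : ℚ)) * (Fu f t * Fu f t)))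
      = (2:ℚ) ^ n * β * (2 * (∑ t : Vtx n, Fu f t * Fu f t)) := by
    ring_nf
    ring_nf at main
    linarith [main]
  exact mul_left_cancel₀ hne h3'

end Margin

-- chunk 7
section Main
variable {n a b c d : ℕ} {C0 : Finset (Vtx n)}

lemma wt_zero (n : ℕ) : wt (0 : Vtx n) = 0 := by
  unfold wt
  rw [Finset.card_eq_zero]
  apply Finset.filter_eq_empty_iff.mpr
  intro i _
  show ¬((0 : Vtx n) i = 1)
  simp

theorem key_identity (h : IsEqPartition C0 a b c d) (hab : a + b = n) (hcd : c + d = n)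
    (hbc : b ≠ c) (h3 : 3 * ((a : ℤ) - c) = -(n : ℤ)) (hn : 0 < n) (i : Fin n) :
    3 * (Finset.univ.filter (fun x : Vtx n => x ∈ C0 ∧ x + ee i ∉ C0)).card * (b + c)^2
      = 4 * b * c * 2 ^ n := by
  set f : Vtx n → ℚ := assoc C0 b c with hf
  have hsq : ∀ x, f x * f x = ((b : ℚ) - c) * f x + (b : ℚ) * c := by
    intro x
    by_cases hx : x ∈ C0
    · have hv : f x = (b : ℚ) := by rw [hf]; unfold assoc; rw [if_pos hx]
      rw [hv]; ring
    · have hv : f x = -(c : ℚ) := by rw [hf]; unfold assoc; rw [if_neg hx]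
      rw [hv]; ring
  have heig := eigen h hab hcd
  have hsupp : ∀ y : Vtx n, Fu f y ≠ 0 → 3 * wt y = 2 * n := by
    intro y hy
    have hl := support_lemma f ((a : ℚ) - c) heig y hy
    have h3Q : 3 * ((a : ℚ) - c) = -(n : ℚ) := by exact_mod_cast h3
    have : (3 : ℚ) * wt y = 2 * n := by linarith
    exact_mod_cast this
  have hF0 : Fu f 0 = 0 := by
    by_contra hne
    have := hsupp 0 hne
    rw [wt_zero] at this
    omega
  have hbQ : ((b : ℚ) - c) ≠ 0 := by
    intro hq
    apply hbc
    have : (b : ℚ) = c := by linarith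
    exact_mod_cast this
  have hmargin := margin_eq f ((b : ℚ) - c) ((b : ℚ) * c) hsq hsupp hF0 hbQ i
  set A := ∑ t : Vtx n, (((t i).val : ℚ)) * (Fu f t * Fu f t) with hA
  set P := ∑ t : Vtx n, Fu f t * Fu f t with hP
  -- sum of f is zero
  have hsumf : ∑ x : Vtx n, f x = 0 := by
    rw [← hF0]
    unfold Fu
    refine Finset.sum_congr rfl (fun z _ => ?_)
    rw [ip_symm, ip_zero_left, pow_zero, mul_one]
  -- sum of f^2
  have hsumf2 : ∑ x : Vtx n, f x * f x = (b : ℚ) * c * 2 ^ n := by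
    rw [Finset.sum_congr rfl (fun x _ => hsq x), Finset.sum_add_distrib, ← Finset.mul_sum,
      hsumf, Finset.sum_const, Finset.card_univ, card_vtx, mul_zero, zero_add, nsmul_eq_mul]
    push_cast
    ring
  -- Parseval
  have hPval : P = 2 ^ n * ((b : ℚ) * c * 2 ^ n) := by
    rw [hP, ← hsumf2]
    have := corr_eq f (0 : Vtx n)
    rw [Finset.sum_congr rfl (fun t (_ : t ∈ Finset.univ) => by
      rw [ip_zero_left, pow_zero, mul_one])] at this
    rw [this]
    exact congrArg _ (Finset.sum_congr rfl (fun x _ => by rw [add_zero]))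
  -- correlation in direction i
  have hcorr : Fu f 0 = Fu f 0 := rfl
  have hcorri : P - 2 * A = 2 ^ n * ∑ x : Vtx n, f x * f (x + ee i) := by
    have hce := corr_eq f (ee i)
    have hlhs : ∑ t : Vtx n, Fu f t * Fu f t * (-1 : ℚ) ^ ip (ee i) t
        = P - 2 * A := by
      rw [hP, hA, Finset.mul_sum, ← Finset.sum_sub_distrib]
      refine Finset.sum_congr rfl (fun t _ => ?_)
      rw [ip_ee]
      rcases zmod2_cases (t i) with ht | ht <;> rw [ht] <;>
        first
        | (rw [show ((0 : ZMod 2)).val = 0 from rfl]; push_cast; ring)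
        | (rw [show ((1 : ZMod 2)).val = 1 from rfl]; push_cast; ring)
    rw [← hlhs, hce]
  -- combinatorial evaluation of the correlation
  set Ei := (Finset.univ.filter (fun x : Vtx n => x ∈ C0 ∧ x + ee i ∉ C0)).card with hEi
  have hswap : (Finset.univ.filter (fun x : Vtx n => x ∉ C0 ∧ x + ee i ∈ C0)).card = Ei := by
    rw [hEi]
    apply Finset.card_bij' (fun x _ => x + ee i) (fun x _ => x + ee i)
    · intro x hx
      simp only [Finset.mem_filter, Finset.mem_univ, true_and] at hx ⊢
      rw [vtx_add_cancel_right]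
      exact ⟨hx.2, fun hc => hx.1 hc⟩
    · intro x hx
      simp only [Finset.mem_filter, Finset.mem_univ, true_and] at hx ⊢
      rw [vtx_add_cancel_right]
      exact ⟨hx.2, hx.1⟩
    · intro x _
      rw [vtx_add_cancel_right]
    · intro x _
      rw [vtx_add_cancel_right]
  have hcomb : ∑ x : Vtx n, f x * (f x - f (x + ee i)) = (Ei : ℚ) * ((b : ℚ) + c)^2 := by
    have hpt : ∀ x : Vtx n, f x * (f x - f (x + ee i))
        = (if x ∈ C0 ∧ x + ee i ∉ C0 then ((b : ℚ) + c) * b else 0)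
          + (if x ∉ C0 ∧ x + ee i ∈ C0 then ((b : ℚ) + c) * c else 0) := by
      intro x
      show assoc C0 b c x * (assoc C0 b c x - assoc C0 b c (x + ee i)) = _
      unfold assoc
      by_cases hx : x ∈ C0 <;> by_cases hy : x + ee i ∈ C0 <;>
        simp only [hx, hy, if_pos, if_neg, not_true, not_false_iff, true_and, false_and,
          and_true, and_false, if_true, if_false] <;> ring
    rw [Finset.sum_congr rfl (fun x _ => hpt x), Finset.sum_add_distrib]
    rw [← Finset.sum_filter, ← Finset.sum_filter, Finset.sum_const, Finset.sum_const, hswap]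
    rw [nsmul_eq_mul, nsmul_eq_mul, ← hEi]
    ring
  -- put everything together over ℚ
  have hsplit : ∑ x : Vtx n, f x * (f x - f (x + ee i))
      = (b : ℚ) * c * 2 ^ n - ∑ x : Vtx n, f x * f (x + ee i) := by
    rw [← hsumf2, ← Finset.sum_sub_distrib]
    exact Finset.sum_congr rfl (fun x _ => by ring)
  have h2n : ((2 : ℚ) ^ n) ≠ 0 := by positivity
  have hQ : 3 * (Ei : ℚ) * ((b : ℚ) + c)^2 = 4 * b * c * 2 ^ n := by
    have e1 : (Ei : ℚ) * ((b : ℚ) + c)^2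
        = (b : ℚ) * c * 2 ^ n - ∑ x : Vtx n, f x * f (x + ee i) := by
      rw [← hcomb, hsplit]
    have e2 : ∑ x : Vtx n, f x * f (x + ee i) = (P - 2 * A) / 2 ^ n := by
      rw [hcorri]
      field_simp
    have e3 : 3 * (P - 2 * A) = -P := by
      linarith [hmargin]
    rw [e2] at e1
    have e4 : 3 * ((Ei : ℚ) * ((b : ℚ) + c)^2)
        = 3 * ((b : ℚ) * c * 2 ^ n) - 3 * ((P - 2*A) / 2 ^ n) := by
      rw [e1]; ring
    rw [show 3 * ((P - 2*A) / 2^n) = (3 * (P - 2*A)) / 2^n by ring, e3, hPval] at e4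
    have e5 : -(2 ^ n * ((b : ℚ) * c * 2 ^ n)) / 2 ^ n = -((b : ℚ) * c * 2 ^ n) := by
      rw [neg_div]
      congr 1
      rw [mul_comm, mul_div_assoc, div_self h2n, mul_one]
    rw [e5] at e4
    linarith [e4]
  exact_mod_cast hQ

end Main

-- endgame arithmetic
lemma endgame (b c E m : ℕ) (hbc : b ≠ c) (heq : 3 * E * (b + c)^2 = 4 * b * c * 2 ^ m) :
    3 ∣ b / Nat.gcd b c ∨ 3 ∣ c / Nat.gcd b c := by
  set g := Nat.gcd b c with hg
  have hgne : g ≠ 0 := by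
    intro h0
    rw [hg] at h0
    have hb0 : b = 0 := Nat.eq_zero_of_gcd_eq_zero_left h0
    have hc0 : c = 0 := Nat.eq_zero_of_gcd_eq_zero_right h0
    exact hbc (hb0.trans hc0.symm)
  set b' := b / g with hb'
  set c' := c / g with hc'
  have hbfac : b = g * b' := (Nat.mul_div_cancel' (Nat.gcd_dvd_left b c)).symm
  have hcfac : c = g * c' := (Nat.mul_div_cancel' (Nat.gcd_dvd_right b c)).symm
  have heq2 : g^2 * (3 * E * (b' + c')^2) = g^2 * (4 * b' * c' * 2 ^ m) := by
    have lhs : 3 * E * (b + c)^2 = g^2 * (3 * E * (b' + c')^2) := by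
      rw [hbfac, hcfac]; ring
    have rhs : 4 * b * c * 2 ^ m = g^2 * (4 * b' * c' * 2 ^ m) := by
      rw [hbfac, hcfac]; ring
    rw [← lhs, ← rhs]
    exact heq
  have heq3 : 3 * E * (b' + c')^2 = 4 * b' * c' * 2 ^ m :=
    Nat.eq_of_mul_eq_mul_left (Nat.pos_of_ne_zero (by positivity)) heq2
  have hdvd : 3 ∣ 4 * b' * c' * 2 ^ m := ⟨E * (b' + c')^2, by linarith⟩
  have p3 : Nat.Prime 3 := by norm_num
  have h1 : 3 ∣ 4 * b' * c' ∨ 3 ∣ 2 ^ m := (Nat.Prime.dvd_mul p3).mp hdvd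
  rcases h1 with h1 | h1
  · have h2 : 3 ∣ 4 * b' ∨ 3 ∣ c' := (Nat.Prime.dvd_mul p3).mp h1
    rcases h2 with h2 | h2
    · have h3 : 3 ∣ 4 ∨ 3 ∣ b' := (Nat.Prime.dvd_mul p3).mp h2
      rcases h3 with h3 | h3
      · norm_num at h3
      · exact Or.inl h3
    · exact Or.inr h2
  · exfalso
    have := Nat.Prime.dvd_of_dvd_pow p3 h1
    norm_num at this

theorem stmt9 (n a b c d : ℕ) (C0 : Finset (Vtx n))
    (h : IsEqPartition C0 a b c d) (hab : a + b = n) (hcd : c + d = n)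
    (hbc : b ≠ c) (h3 : 3 * ((a : ℤ) - c) = -(n : ℤ)) :
    3 ∣ b / Nat.gcd b c ∨ 3 ∣ c / Nat.gcd b c := by
  rcases Nat.eq_zero_or_pos n with hn | hn
  · exfalso
    apply hbc
    omega
  · have hkey := key_identity h hab hcd hbc h3 hn ⟨0, hn⟩
    exact endgame b c _ n hbc hkey
end
end
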